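/- arXiv:2210.07306 — 4 statements merged into one kernel-verified Lean document; each statement's English description precedes it below -/
import Mathlib

section
/- Let w and h be positive integers with h/w > 3 + 2√2. Then the number of Young diagrams of size w×h with an odd number of steps exceeds the number of Young diagrams of size w×h with an even number of steps if and only if w is odd. -/
/-- `f : Fin h → ℕ` encodes a Young diagram of size `w × h`: a nondecreasing
sequence of positive integers `x₁ ≤ … ≤ x_h` with `x_h = w` (equivalently, for
a monotone sequence: all values are `≤ w` and the value `w` is attained). -/
def IsYoungDiagram (w : ℕ) {h : ℕ} (f : Fin h → ℕ) : Prop :=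
  Monotone f ∧ (∀ i, 1 ≤ f i) ∧ (∀ i, f i ≤ w) ∧ (∃ i, f i = w)

/-- The number of steps of a Young diagram: the number of distinct values
among `x₁, …, x_h`. -/
def numSteps {h : ℕ} (f : Fin h → ℕ) : ℕ := (Finset.univ.image f).card

/-- The number of Young diagrams of size `w × h` whose number of steps
satisfies the predicate `p`. -/
noncomputable def youngCount (w h : ℕ) (p : ℕ → Prop) : ℕ :=
  Nat.card {f : Fin h → ℕ // IsYoungDiagram w f ∧ p (numSteps f)}

/-!
A diagram is determined by the set `A` of its values other than `w` and the set `B` of its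
ascent positions: `A ⊆ [1, w)`, `B ⊆ [0, h - 1)`, and `#A = #B = (number of steps) - 1`, the
`i`-th entry being the `r`-th smallest element of `A ∪ {w}` where `r` counts the ascents
before `i`. Hence the odd-minus-even count is `z_m = ∑ₖ (-1)ᵏ C(m, k) C(n, k)` with
`m = w - 1`, `n = h - 1`.

A telescoping certificate gives `(m + 2) z_{m+2} = (3m + 4 - n) z_{m+1} - (2m + 2) z_m`. When
`n + 1 > (3 + 2√2)(m + 1)`, the sequence `(-1)ʲ z_j` grows by a factor at least `√2` at each
step `j ≤ m`, so `z_m` has the sign of `(-1)ᵐ`. The threshold is where the characteristic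
polynomial `r² - (λ - 3) r + 2` of the limiting recurrence (`n ≈ λ m`) has the double root `√2`.
-/

open Finset Nat

section NthCount

variable {s : Finset ℕ}

lemma nth_mem_finset {j : ℕ} (hj : j < #s) : nth (· ∈ s) j ∈ s :=
  nth_mem_of_lt_card s.finite_toSet (by rwa [finite_toSet_toFinset])

lemma nth_le_nth_finset {i j : ℕ} (hij : i ≤ j) (hj : j < #s) :
    nth (· ∈ s) i ≤ nth (· ∈ s) j :=
  nth_le_nth_of_lt_card s.finite_toSet hij (by rwa [finite_toSet_toFinset])

lemma nth_lt_nth_finset_iff {i j : ℕ} (hi : i < #s) (hj : j < #s) :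
    nth (· ∈ s) i < nth (· ∈ s) j ↔ i < j :=
  (nth_strictMonoOn s.finite_toSet).lt_iff_lt (by simpa using hi) (by simpa using hj)

lemma count_nth_finset {j : ℕ} (hj : j < #s) : count (· ∈ s) (nth (· ∈ s) j) = j :=
  count_nth_of_lt_card_finite s.finite_toSet (by rwa [finite_toSet_toFinset])

lemma count_le_card_finset (x : ℕ) : count (· ∈ s) x ≤ #s := by
  simpa using count_le_card s.finite_toSet x

lemma count_lt_card_finset {x : ℕ} (hx : x ∈ s) : count (· ∈ s) x < #s := by
  simpa using count_lt_card s.finite_toSet hx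

lemma count_finset_eq_card_filter_lt (x : ℕ) : count (· ∈ s) x = #{y ∈ s | y < x} := by
  rw [count_eq_card_filter_range]
  congr 1
  ext y
  simp [and_comm]

lemma count_finset_eq_card {x : ℕ} (hx : ∀ y ∈ s, y < x) : count (· ∈ s) x = #s := by
  rw [count_finset_eq_card_filter_lt, filter_true_of_mem hx]

end NthCount

lemma count_eq_count_of_forall_not {p : ℕ → Prop} [DecidablePred p] {a b : ℕ} (hab : a ≤ b)
    (hp : ∀ x, a ≤ x → x < b → ¬ p x) : count p a = count p b := by
  refine le_antisymm (count_monotone p hab) (not_lt.1 fun hlt => ?_)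
  obtain ⟨x, ⟨hax, hxb⟩, hx⟩ := exists_of_count_lt_count hlt
  exact hp x hax hxb hx

def ascents (g : ℕ → ℕ) (n : ℕ) : Finset ℕ := {i ∈ range n | g i < g (i + 1)}

lemma count_image_eq_count_ascents {g : ℕ → ℕ} (hg : Monotone g) {n i : ℕ} (hi : i ≤ n) :
    count (· ∈ (range (n + 1)).image g) (g i) = count (· ∈ ascents g n) i := by
  induction i with
  | zero =>
    rw [count_zero, count_iff_forall_not]
    rintro x hx hmem
    obtain ⟨j, -, rfl⟩ := mem_image.1 hmem
    exact (hg (Nat.zero_le j)).not_gt hx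
  | succ i ih =>
    have hmem : i ∈ ascents g n ↔ g i < g (i + 1) := by
      simp only [ascents, mem_filter, mem_range]
      exact and_iff_right (by omega)
    rw [count_succ, ← ih (by omega)]
    by_cases hlt : g i < g (i + 1)
    · have hgap : count (· ∈ (range (n + 1)).image g) (g i + 1) =
          count (· ∈ (range (n + 1)).image g) (g (i + 1)) := by
        refine count_eq_count_of_forall_not hlt fun x hx hx' hmem => ?_
        obtain ⟨j, -, rfl⟩ := mem_image.1 hmem
        rcases le_or_gt j i with hji | hij
        · exact absurd (hg hji) (by omega)
        · exact absurd (hg (show i + 1 ≤ j by omega)) (by omega)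
      rw [← hgap, count_succ, if_pos (mem_image_of_mem g (mem_range.2 (by omega))),
        if_pos (hmem.2 hlt)]
    · rw [le_antisymm (not_lt.1 hlt) (hg (Nat.le_succ i)), if_neg (mt hmem.1 hlt), add_zero]

section Encoding

variable {w n : ℕ}

lemma IsYoungDiagram.apply_last {f : Fin (n + 1) → ℕ} (hf : IsYoungDiagram w f) :
    f (Fin.last n) = w := by
  obtain ⟨i, hi⟩ := hf.2.2.2
  exact le_antisymm (hf.2.2.1 _) (hi ▸ hf.1 (Fin.le_last i))

lemma IsYoungDiagram.width_mem_image {f : Fin (n + 1) → ℕ} (hf : IsYoungDiagram w f) :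
    w ∈ univ.image f :=
  hf.apply_last ▸ mem_image_of_mem f (mem_univ _)

lemma IsYoungDiagram.erase_image_subset {f : Fin (n + 1) → ℕ} (hf : IsYoungDiagram w f) :
    (univ.image f).erase w ⊆ Ico 1 w := by
  intro x hx
  obtain ⟨hxw, hx⟩ := mem_erase.1 hx
  obtain ⟨i, -, rfl⟩ := mem_image.1 hx
  exact mem_Ico.2 ⟨hf.2.1 i, lt_of_le_of_ne (hf.2.2.1 i) hxw⟩

lemma IsYoungDiagram.numSteps_eq {f : Fin (n + 1) → ℕ} (hf : IsYoungDiagram w f) :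
    numSteps f = #((univ.image f).erase w) + 1 :=
  (card_erase_add_one hf.width_mem_image).symm

lemma Fin.clamp_val (i : Fin (n + 1)) : Fin.clamp i n = i :=
  Fin.ext (min_eq_left (Nat.lt_succ_iff.1 i.isLt))

def diagramAscents (f : Fin (n + 1) → ℕ) : Finset ℕ := ascents (fun i => f (Fin.clamp i n)) n

lemma count_image_eq_count_diagramAscents {f : Fin (n + 1) → ℕ} (hf : Monotone f)
    (i : Fin (n + 1)) : count (· ∈ univ.image f) (f i) = count (· ∈ diagramAscents f) i := by
  have himage : (range (n + 1)).image (fun i => f (Fin.clamp i n)) = univ.image f := by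
    ext x
    simp only [mem_image, mem_range, mem_univ, true_and]
    exact ⟨fun ⟨j, _, hj⟩ => ⟨_, hj⟩, fun ⟨j, hj⟩ => ⟨j, j.isLt, by rw [Fin.clamp_val, hj]⟩⟩
  have key := count_image_eq_count_ascents (g := fun i => f (Fin.clamp i n))
    (hf.comp Fin.clamp_monotone) (Nat.lt_succ_iff.1 i.isLt)
  rwa [himage, Fin.clamp_val] at key

lemma IsYoungDiagram.card_erase_image {f : Fin (n + 1) → ℕ} (hf : IsYoungDiagram w f) :
    #((univ.image f).erase w) = #(diagramAscents f) := by
  have hV : {y ∈ univ.image f | y < w} = (univ.image f).erase w := by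
    ext x
    simp only [mem_filter, mem_erase, mem_image, mem_univ, true_and]
    constructor
    · rintro ⟨⟨i, rfl⟩, hi⟩
      exact ⟨hi.ne, i, rfl⟩
    · rintro ⟨hi, i, rfl⟩
      exact ⟨⟨i, rfl⟩, lt_of_le_of_ne (hf.2.2.1 i) hi⟩
  have hB : count (· ∈ diagramAscents f) n = #(diagramAscents f) :=
    count_finset_eq_card fun i hi => mem_range.1 (filter_subset _ _ hi)
  have key := count_image_eq_count_diagramAscents hf.1 (Fin.last n)
  rwa [hf.apply_last, Fin.val_last, count_finset_eq_card_filter_lt, hV, hB] at key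

noncomputable def ofValuesAscents (w n : ℕ) (A B : Finset ℕ) : Fin (n + 1) → ℕ :=
  fun i => nth (· ∈ insert w A) (count (· ∈ B) i)

lemma IsYoungDiagram.ofValuesAscents_eq {f : Fin (n + 1) → ℕ} (hf : IsYoungDiagram w f) :
    ofValuesAscents w n ((univ.image f).erase w) (diagramAscents f) = f := by
  funext i
  rw [ofValuesAscents, insert_erase hf.width_mem_image, ← count_image_eq_count_diagramAscents hf.1,
    nth_count (mem_image_of_mem f (mem_univ i))]

end Encoding

section Decoding

variable {w n : ℕ} {A B : Finset ℕ}

lemma card_insert_of_subset_Ico (hA : A ⊆ Ico 1 w) : #(insert w A) = #A + 1 :=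
  card_insert_of_notMem fun hw => (mem_Ico.1 (hA hw)).2.false

lemma count_lt_card_insert (hA : A ⊆ Ico 1 w) (hAB : #A = #B) (i : ℕ) :
    count (· ∈ B) i < #(insert w A) := by
  have := count_le_card_finset (s := B) i
  rw [card_insert_of_subset_Ico hA]
  omega

lemma nth_insert_card (hA : A ⊆ Ico 1 w) : nth (· ∈ insert w A) #A = w := by
  have hcount : count (· ∈ insert w A) w = #A := by
    rw [count_finset_eq_card_filter_lt, filter_insert, if_neg (lt_irrefl w),
      filter_true_of_mem fun a ha => (mem_Ico.1 (hA ha)).2]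
  rw [← hcount, nth_count (mem_insert_self w A)]

lemma ofValuesAscents_mem (hA : A ⊆ Ico 1 w) (hAB : #A = #B) (i : Fin (n + 1)) :
    ofValuesAscents w n A B i ∈ insert w A :=
  nth_mem_finset (count_lt_card_insert hA hAB i)

lemma ofValuesAscents_clamp {i : ℕ} (hi : i ≤ n) :
    ofValuesAscents w n A B (Fin.clamp i n) = nth (· ∈ insert w A) (count (· ∈ B) i) := by
  simp [ofValuesAscents, Fin.clamp, min_eq_left hi]

lemma isYoungDiagram_ofValuesAscents (hw : 1 ≤ w) (hA : A ⊆ Ico 1 w) (hB : B ⊆ range n)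
    (hAB : #A = #B) : IsYoungDiagram w (ofValuesAscents w n A B) := by
  have hbounds (i : Fin (n + 1)) :
      1 ≤ ofValuesAscents w n A B i ∧ ofValuesAscents w n A B i ≤ w := by
    rcases mem_insert.1 (ofValuesAscents_mem hA hAB i) with h | h
    · exact h.symm ▸ ⟨hw, le_rfl⟩
    · exact (mem_Ico.1 (hA h)).imp id le_of_lt
  refine ⟨fun i j hij => ?_, fun i => (hbounds i).1, fun i => (hbounds i).2, Fin.last n, ?_⟩
  · exact nth_le_nth_finset (count_monotone _ hij) (count_lt_card_insert hA hAB j)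
  · rw [ofValuesAscents, Fin.val_last, count_finset_eq_card fun b hb => mem_range.1 (hB hb),
      ← hAB, nth_insert_card hA]

lemma image_ofValuesAscents (hA : A ⊆ Ico 1 w) (hB : B ⊆ range n) (hAB : #A = #B) :
    univ.image (ofValuesAscents w n A B) = insert w A := by
  refine (image_subset_iff.2 fun i _ => ofValuesAscents_mem hA hAB i).antisymm fun x hx => ?_
  have hx' : count (· ∈ insert w A) x ≤ #B := by
    have := count_lt_card_finset hx
    rw [card_insert_of_subset_Ico hA] at this
    omega
  obtain ⟨i, hi, hcount⟩ : ∃ i ≤ n, count (· ∈ B) i = count (· ∈ insert w A) x := by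
    rcases hx'.lt_or_eq with hlt | heq
    · exact ⟨_, (mem_range.1 (hB (nth_mem_finset hlt))).le, count_nth_finset hlt⟩
    · exact ⟨n, le_rfl, by rw [heq, count_finset_eq_card fun b hb => mem_range.1 (hB hb)]⟩
  refine mem_image.2 ⟨Fin.clamp i n, mem_univ _, ?_⟩
  rw [ofValuesAscents_clamp hi, hcount, nth_count hx]

lemma diagramAscents_ofValuesAscents (hA : A ⊆ Ico 1 w) (hB : B ⊆ range n) (hAB : #A = #B) :
    diagramAscents (ofValuesAscents w n A B) = B := by
  ext i
  simp only [diagramAscents, ascents, mem_filter, mem_range]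
  by_cases hi : i < n
  · rw [ofValuesAscents_clamp hi.le, ofValuesAscents_clamp hi,
      nth_lt_nth_finset_iff (count_lt_card_insert hA hAB _) (count_lt_card_insert hA hAB _),
      count_lt_count_succ_iff, and_iff_right hi]
  · exact iff_of_false (fun h => hi h.1) fun hiB => hi (mem_range.1 (hB hiB))

end Decoding

def diagramData (w n : ℕ) : Finset (Finset ℕ × Finset ℕ) :=
  {AB ∈ (Ico 1 w).powerset ×ˢ (range n).powerset | #AB.1 = #AB.2}

lemma mem_diagramData {w n : ℕ} {AB : Finset ℕ × Finset ℕ} :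
    AB ∈ diagramData w n ↔ AB.1 ⊆ Ico 1 w ∧ AB.2 ⊆ range n ∧ #AB.1 = #AB.2 := by
  simp [diagramData, and_assoc]

noncomputable def youngDiagramEquiv {w : ℕ} (hw : 1 ≤ w) (n : ℕ) :
    {f : Fin (n + 1) → ℕ // IsYoungDiagram w f} ≃ diagramData w n where
  toFun f := ⟨((univ.image f.1).erase w, diagramAscents f.1), mem_diagramData.2
    ⟨f.2.erase_image_subset, filter_subset _ _, f.2.card_erase_image⟩⟩
  invFun AB := ⟨ofValuesAscents w n AB.1.1 AB.1.2, by
    obtain ⟨hA, hB, hAB⟩ := mem_diagramData.1 AB.2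
    exact isYoungDiagram_ofValuesAscents hw hA hB hAB⟩
  left_inv f := Subtype.ext f.2.ofValuesAscents_eq
  right_inv AB := by
    obtain ⟨hA, hB, hAB⟩ := mem_diagramData.1 AB.2
    refine Subtype.ext (Prod.ext ?_ (diagramAscents_ofValuesAscents hA hB hAB))
    exact (congrArg (·.erase w) (image_ofValuesAscents hA hB hAB)).trans
      (erase_insert fun hw => (mem_Ico.1 (hA hw)).2.false)

lemma youngCount_succ_eq_card {w : ℕ} (hw : 1 ≤ w) (n : ℕ) (p : ℕ → Prop) [DecidablePred p] :
    youngCount w (n + 1) p = #{AB ∈ diagramData w n | p (#AB.1 + 1)} := by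
  let e : {f : Fin (n + 1) → ℕ // IsYoungDiagram w f ∧ p (numSteps f)} ≃
      {AB // AB ∈ {AB ∈ diagramData w n | p (#AB.1 + 1)}} :=
    (Equiv.subtypeSubtypeEquivSubtypeInter _ _).symm.trans
      (((youngDiagramEquiv hw n).subtypeEquiv fun f => by rw [f.2.numSteps_eq]; rfl).trans
        ((Equiv.subtypeSubtypeEquivSubtypeInter (· ∈ diagramData w n) _).trans
          (Equiv.subtypeEquivRight fun _ => mem_filter.symm)))
  rw [youngCount, Nat.card_congr e, Nat.card_eq_fintype_card, Fintype.card_coe]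

lemma card_filter_diagramData (m n : ℕ) (p : ℕ → Prop) [DecidablePred p] :
    #{AB ∈ diagramData (m + 1) n | p (#AB.1 + 1)} =
      ∑ k ∈ range (m + 1), if p (k + 1) then m.choose k * n.choose k else 0 := by
  calc #{AB ∈ diagramData (m + 1) n | p (#AB.1 + 1)}
      = ∑ A ∈ (Ico 1 (m + 1)).powerset, if p (#A + 1) then n.choose #A else 0 := by
        rw [diagramData, filter_filter, card_filter, sum_product]
        refine sum_congr rfl fun A _ => ?_
        split_ifs with hp
        · simp only [hp, and_true, ← card_filter]
          rw [filter_congr fun _ _ => eq_comm, ← powersetCard_eq_filter, card_powersetCard,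
            card_range]
        · simp [hp]
    _ = ∑ k ∈ range (m + 1), if p (k + 1) then m.choose k * n.choose k else 0 := by
        rw [sum_powerset_apply_card fun j => if p (j + 1) then n.choose j else 0]
        simp [mul_ite]

lemma youngCount_eq_sum (m n : ℕ) (p : ℕ → Prop) [DecidablePred p] :
    youngCount (m + 1) (n + 1) p =
      ∑ k ∈ range (m + 1), if p (k + 1) then m.choose k * n.choose k else 0 := by
  rw [youngCount_succ_eq_card (Nat.le_add_left 1 m), card_filter_diagramData]

def altChooseTerm (m n k : ℕ) : ℤ := (-1) ^ k * (m.choose k * n.choose k)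

def altChooseSum (m n : ℕ) : ℤ := ∑ k ∈ range (m + 1), altChooseTerm m n k

lemma youngCount_odd_sub_even (m n : ℕ) :
    (youngCount (m + 1) (n + 1) Odd : ℤ) - youngCount (m + 1) (n + 1) Even =
      altChooseSum m n := by
  rw [youngCount_eq_sum, youngCount_eq_sum, altChooseSum]
  push_cast
  rw [← sum_sub_distrib]
  refine sum_congr rfl fun k _ => ?_
  rcases Nat.even_or_odd k with hk | hk <;>
    simp [altChooseTerm, hk, hk.neg_one_pow, Nat.odd_add_one, Nat.even_add_one]

lemma altChooseSum_eq_sum_range {m N : ℕ} (n : ℕ) (hN : m + 1 ≤ N) :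
    altChooseSum m n = ∑ k ∈ range N, altChooseTerm m n k := by
  refine sum_subset (range_subset_range.2 hN) fun k _ hk => ?_
  rw [mem_range, not_lt] at hk
  simp [altChooseTerm, choose_eq_zero_of_lt (Nat.lt_of_succ_le hk)]

lemma cast_choose_succ_mul (n k : ℕ) :
    (n.choose (k + 1) : ℤ) * (k + 1) = n.choose k * (n - k) := by
  rcases le_or_gt k n with hk | hk
  · have h := Nat.choose_succ_right_eq n k
    zify [hk] at h
    exact h
  · simp [choose_eq_zero_of_lt hk, choose_eq_zero_of_lt (hk.trans (Nat.lt_succ_self k))]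

/-- Wilf–Zeilberger certificate for the three-term recurrence of `altChooseSum`. -/
def altChooseCert (m n k : ℕ) : ℤ := (-1) ^ k * k * ((m + 1).choose (k - 1) * n.choose k)

lemma altChooseTerm_recurrence (m n k : ℕ) :
    (m + 2) * altChooseTerm (m + 2) n k + (2 * m + 2) * altChooseTerm m n k
      + (n - (3 * m + 4)) * altChooseTerm (m + 1) n k
      = altChooseCert m n k - altChooseCert m n (k + 1) := by
  cases k with
  | zero =>
    simp only [altChooseTerm, altChooseCert, choose_zero_right, choose_one_right, zero_add,
      Nat.sub_self]
    push_cast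
    ring
  | succ j =>
    have h1 : ((m + 2).choose (j + 1) : ℤ) = (m + 1).choose j + (m + 1).choose (j + 1) := by
      exact_mod_cast Nat.choose_succ_succ (m + 1) j
    have h2 : ((m + 1).choose (j + 1) : ℤ) = m.choose j + m.choose (j + 1) := by
      exact_mod_cast Nat.choose_succ_succ m j
    have h3 : ((m : ℤ) + 1) * m.choose j = (m + 1).choose (j + 1) * (j + 1) := by
      exact_mod_cast Nat.add_one_mul_choose_eq m j
    have h4 := cast_choose_succ_mul (m + 1) j
    have h5 := cast_choose_succ_mul n (j + 1)
    simp only [altChooseTerm, altChooseCert, Nat.add_sub_cancel]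
    push_cast at h4 h5 ⊢
    linear_combination (-1 : ℤ) ^ (j + 1) * (n.choose (j + 1) : ℤ) *
        ((m + 2) * h1 - h4 - (2 * m + 2) * h2 - 2 * h3)
      - (-1 : ℤ) ^ (j + 1) * ((m + 1).choose (j + 1) : ℤ) * h5

lemma altChooseSum_recurrence (m n : ℕ) :
    (m + 2) * altChooseSum (m + 2) n + (2 * m + 2) * altChooseSum m n
      + (n - (3 * m + 4)) * altChooseSum (m + 1) n = 0 := by
  rw [altChooseSum_eq_sum_range (N := m + 3) n le_rfl,
    altChooseSum_eq_sum_range (N := m + 3) n (by omega),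
    altChooseSum_eq_sum_range (N := m + 3) n (by omega), mul_sum, mul_sum, mul_sum,
    ← sum_add_distrib, ← sum_add_distrib,
    sum_congr rfl fun k _ => altChooseTerm_recurrence m n k, sum_range_sub']
  simp [altChooseCert]

lemma sqrt_two_mul_le_of_recurrence {j n X Y Z : ℝ} (hj : 0 ≤ j)
    (hn : (3 + 2 * √2) * (j + 2) < n + 1) (hY : 0 < Y) (hXY : √2 * X ≤ Y)
    (hZ : (j + 2) * Z = (n - 3 * j - 4) * Y - (2 * j + 2) * X) : √2 * Y ≤ Z := by
  have hs : √2 * √2 = 2 := Real.mul_self_sqrt zero_le_two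
  have hX : (2 * j + 2) * X ≤ (j + 1) * √2 * Y :=
    calc (2 * j + 2) * X = (j + 1) * √2 * (√2 * X) := by linear_combination (-(j + 1) * X) * hs
      _ ≤ (j + 1) * √2 * Y := mul_le_mul_of_nonneg_left hXY (by positivity)
  have hcoeff : 0 ≤ n - 3 * j - 4 - √2 * (2 * j + 3) := by nlinarith [Real.sqrt_nonneg 2]
  have hprod : 0 ≤ (j + 2) * (Z - √2 * Y) := by nlinarith [mul_nonneg hcoeff hY.le]
  nlinarith

lemma pos_of_recurrence {x : ℕ → ℝ} {n : ℝ} {m : ℕ} (hn : (3 + 2 * √2) * (m + 1) < n + 1)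
    (h0 : 0 < x 0) (h1 : √2 * x 0 ≤ x 1)
    (hrec : ∀ j : ℕ, (j + 2) * x (j + 2) = (n - 3 * j - 4) * x (j + 1) - (2 * j + 2) * x j) :
    0 < x m := by
  suffices key : ∀ j ≤ m, 0 < x j ∧ √2 * x j ≤ x (j + 1) from (key m le_rfl).1
  intro j hj
  induction j with
  | zero => exact ⟨h0, h1⟩
  | succ j ih =>
    obtain ⟨hpos, hle⟩ := ih (by omega)
    have hpos' : 0 < x (j + 1) := (mul_pos (Real.sqrt_pos.2 two_pos) hpos).trans_le hle
    refine ⟨hpos', sqrt_two_mul_le_of_recurrence j.cast_nonneg ?_ hpos' hle (hrec j)⟩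
    have hjm : ((j : ℝ) + 2) ≤ m + 1 := by exact_mod_cast Nat.succ_le_succ hj
    nlinarith [Real.sqrt_nonneg 2]

lemma altChooseSum_zero (n : ℕ) : altChooseSum 0 n = 1 := by
  simp [altChooseSum, altChooseTerm]

lemma altChooseSum_one (n : ℕ) : altChooseSum 1 n = 1 - n := by
  simp [altChooseSum, altChooseTerm, sum_range_succ, sub_eq_add_neg]

lemma neg_one_pow_mul_altChooseSum_pos {m n : ℕ} (hmn : (3 + 2 * √2) * (m + 1) < n + 1) :
    0 < (-1) ^ m * (altChooseSum m n : ℝ) := by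
  refine pos_of_recurrence (x := fun j => (-1) ^ j * (altChooseSum j n : ℝ)) hmn
    (by simp [altChooseSum_zero]) ?_ fun j => ?_
  · have hm : (3 : ℝ) + 2 * √2 ≤ (3 + 2 * √2) * (m + 1) :=
      le_mul_of_one_le_right (by positivity) (by simp)
    show √2 * ((-1) ^ 0 * (altChooseSum 0 n : ℝ)) ≤ (-1) ^ 1 * (altChooseSum 1 n : ℝ)
    rw [altChooseSum_zero, altChooseSum_one]
    push_cast
    nlinarith [Real.sqrt_nonneg 2]
  · have hrec := congrArg (Int.cast : ℤ → ℝ) (altChooseSum_recurrence j n)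
    push_cast at hrec
    simp only [pow_succ]
    linear_combination (-1 : ℝ) ^ j * hrec

theorem stmt0 (w h : ℕ) (hw : 0 < w) (hh : 0 < h)
    (hratio : 3 + 2 * Real.sqrt 2 < (h : ℝ) / (w : ℝ)) :
    youngCount w h Even < youngCount w h Odd ↔ Odd w := by
  obtain ⟨m, rfl⟩ : ∃ m, w = m + 1 := ⟨w - 1, by omega⟩
  obtain ⟨n, rfl⟩ : ∃ n, h = n + 1 := ⟨h - 1, by omega⟩
  have hdiff := youngCount_odd_sub_even m n
  have hsign : 0 < (-1) ^ m * (altChooseSum m n : ℝ) := by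
    refine neg_one_pow_mul_altChooseSum_pos ?_
    rw [lt_div_iff₀ (by positivity)] at hratio
    exact_mod_cast hratio
  rw [Nat.odd_add_one, Nat.not_odd_iff_even]
  rcases Nat.even_or_odd m with hm | hm
  · rw [hm.neg_one_pow, one_mul] at hsign
    have : 0 < altChooseSum m n := by exact_mod_cast hsign
    exact iff_of_true (by omega) hm
  · rw [hm.neg_one_pow, neg_one_mul, neg_pos] at hsign
    have : altChooseSum m n < 0 := by exact_mod_cast hsign
    exact iff_of_false (by omega) (Nat.not_even_iff_odd.2 hm)
end

section
/- The limit of ã₁(4, t)/ã₁(2, t) as t → ∞ along integers t ≡ 3 (mod 4) exists and equals 4 (the denominator ã₁(2, t) being nonzero for all such t). -/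
open Complex Real Filter Asymptotics

noncomputable section

/-- Number of turns of the checker path with `T` moves whose set of indices of
rightward moves (among moves `0, …, T-1`) is `R`. -/
def turnsOf (T : ℕ) (R : Finset ℕ) : ℕ :=
  ((Finset.Ico 1 T).filter fun i => ¬((i ∈ R) ↔ (i - 1 ∈ R))).card

/-- The Feynman-checkers wave function on the integer lattice, with `μ = m·ε`:
`waveA X T μ = a(X·ε, T·ε, m, ε)`.  A checker path from `(0,0)` to `(X·ε, T·ε)`
consists of `T` moves, each `(ε,ε)` ("right") or `(-ε,ε)` ("left"); it is
determined by the set `R ⊆ {0,…,T-1}` of indices of its rightward moves.  The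
path ends at `X·ε` iff `R.card - (T - R.card) = X`, and its second point is
`(ε,ε)` iff `0 ∈ R`. -/
def waveA (X : ℤ) (T : ℕ) (μ : ℝ) : ℂ :=
  (((1 + μ ^ 2) ^ ((1 - (T : ℝ)) / 2) : ℝ) : ℂ) * Complex.I *
    ∑ R ∈ (Finset.range T).powerset,
      if 0 ∈ R ∧ 2 * (R.card : ℤ) - (T : ℤ) = X then
        (-Complex.I * (μ : ℂ)) ^ turnsOf T R
      else 0

/-- The wave function `a(x, t, m, ε)` for lattice points `(x,t) ∈ εℤ²`. -/
def wf (x t m ε : ℝ) : ℂ := waveA ⌊x / ε⌋ ⌊t / ε⌋.toNat (m * ε)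

/-- `ã₁(x, t, m, ε) = Re a(x, t+ε, m, ε)`. -/
def a1 (x t m ε : ℝ) : ℝ := (wf x (t + ε) m ε).re

/-- `ã₂(x, t, m, ε) = Im a(x+ε, t+ε, m, ε)`. -/
def a2 (x t m ε : ℝ) : ℝ := (wf (x + ε) (t + ε) m ε).im

end

namespace FC
open Finset Polynomial


def cc (n : ℤ) (k : ℕ) : ℤ := if 0 ≤ n then ((n.toNat).choose k : ℤ) else 0

lemma cc_ofNat (n : ℕ) (k : ℕ) : cc (n : ℤ) k = (n.choose k : ℤ) := by
  simp [cc]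

lemma cc_neg {n : ℤ} (h : n < 0) (k : ℕ) : cc n k = 0 := by
  simp [cc, not_le.2 h]

lemma cc_eq_zero_of_lt {n : ℤ} {k : ℕ} (h : n < (k : ℤ)) : cc n k = 0 := by
  unfold cc
  split
  · rename_i h0
    have : n.toNat < k := by omega
    simp [Nat.choose_eq_zero_of_lt this]
  · rfl

lemma cc_zero_right (n : ℤ) : cc n 0 = if 0 ≤ n then 1 else 0 := by
  simp [cc]

lemma cc_pascal (n : ℤ) (k : ℕ) : cc (n + 1) (k + 1) = cc n k + cc n (k + 1) := by
  rcases lt_trichotomy n (-1) with h | h | h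
  · rw [cc_neg (by omega), cc_neg (by omega), cc_neg (by omega)]; ring
  · subst h
    norm_num [cc_neg (show (-1:ℤ) < 0 by norm_num), cc]
  · have h0 : 0 ≤ n := by omega
    obtain ⟨m, rfl⟩ := Int.eq_ofNat_of_zero_le h0
    have : ((m:ℤ) + 1) = ((m+1 : ℕ) : ℤ) := by push_cast; ring
    rw [this, cc_ofNat, cc_ofNat, cc_ofNat, Nat.choose_succ_succ]
    push_cast; ring

def gsum (a b : ℤ) (N : ℕ) : ℤ := ∑ r ∈ range N, (-1)^r * cc a r * cc b r
def fsum (a b : ℤ) (N : ℕ) : ℤ := ∑ s ∈ range N, (-1)^s * cc a (s+1) * cc b s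

lemma gsum_succ {a b : ℤ} {N : ℕ} (h : a < (N:ℤ) ∨ b < (N:ℤ)) :
    gsum a b (N+1) = gsum a b N := by
  unfold gsum
  rw [Finset.sum_range_succ]
  rcases h with h | h
  · rw [cc_eq_zero_of_lt h]; ring
  · rw [cc_eq_zero_of_lt h]; ring

lemma fsum_succ {a b : ℤ} {N : ℕ} (h : a < (N:ℤ) + 1 ∨ b < (N:ℤ)) :
    fsum a b (N+1) = fsum a b N := by
  unfold fsum
  rw [Finset.sum_range_succ]
  rcases h with h | h
  · rw [cc_eq_zero_of_lt (by exact_mod_cast h)]; ring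
  · rw [cc_eq_zero_of_lt h]; ring

lemma gsum_neg_left {a b : ℤ} (h : a < 0) (N : ℕ) : gsum a b N = 0 := by
  unfold gsum
  refine Finset.sum_eq_zero fun r _ => ?_
  rw [cc_neg h]; ring

lemma fsum_neg_left {a b : ℤ} (h : a < 0) (N : ℕ) : fsum a b N = 0 := by
  unfold fsum
  refine Finset.sum_eq_zero fun r _ => ?_
  rw [cc_neg h]; ring

lemma key1 (a b : ℤ) (N : ℕ) : fsum (a+1) b N = fsum a b N + gsum a b N := by
  unfold fsum gsum
  rw [← Finset.sum_add_distrib]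
  refine Finset.sum_congr rfl fun s _ => ?_
  rw [cc_pascal]; ring

lemma key2 (a b : ℤ) (ha : 0 ≤ a) (N : ℕ) :
    gsum a b (N+1) = (if b = 0 then 1 else 0) - fsum a (b-1) N + gsum a (b-1) (N+1) := by
  unfold gsum fsum
  rw [Finset.sum_range_succ' (fun r => (-1)^r * cc a r * cc b r) N,
      Finset.sum_range_succ' (fun r => (-1)^r * cc a r * cc (b-1) r) N]
  have hb : ∀ s : ℕ, cc b (s+1) = cc (b-1) s + cc (b-1) (s+1) := by
    intro s
    have := cc_pascal (b-1) s
    simpa using this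
  have h0 : cc a 0 = 1 := by simp [cc_zero_right, ha]
  have hbz : cc b 0 - cc (b-1) 0 = if b = 0 then 1 else 0 := by
    rw [cc_zero_right, cc_zero_right]
    by_cases h : b = 0
    · simp [h]
    · rcases lt_or_ge b 0 with h' | h'
      · rw [if_neg (by omega), if_neg (by omega), if_neg h]; ring
      · rw [if_pos h', if_pos (by omega), if_neg h]; ring
  have expand : ∀ s ∈ range N,
      (fun r => (-1)^r * cc a r * cc b r) (s+1)
        = -((-1)^s * cc a (s+1) * cc (b-1) s)
          + (fun r => (-1)^r * cc a r * cc (b-1) r) (s+1) := by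
    intro s _
    simp only
    rw [hb s, pow_succ]
    ring
  rw [Finset.sum_congr rfl expand, Finset.sum_add_distrib]
  simp only [pow_zero, one_mul, h0]
  rw [← hbz]
  rw [Finset.sum_neg_distrib]
  ring


def Gf (T : ℕ) (X : ℤ) : ℤ :=
  if (X + T) % 2 = 0 then gsum ((T + X)/2 - 1) ((T:ℤ) - (T + X)/2 - 1) T else 0

def Ff (T : ℕ) (X : ℤ) : ℤ :=
  if (X + T) % 2 = 0 then
    (if X = T then 1 else 0) - fsum ((T + X)/2 - 1) ((T:ℤ) - (T + X)/2 - 1) T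
  else 0

lemma Ff_rec (T : ℕ) (hT : 1 ≤ T) (X : ℤ) : Ff (T+1) X = Ff T (X-1) - Gf T (X-1) := by
  by_cases hp : (X + ((T:ℤ)+1)) % 2 = 0
  · have hp' : ((X - 1) + (T:ℤ)) % 2 = 0 := by omega
    set c : ℤ := ((T:ℤ) + 1 + X)/2 with hc
    have h2c : 2 * c = (T:ℤ) + 1 + X := by omega
    have e1 : ((T:ℤ) + X - 1)/2 = c - 1 := by omega
    unfold Ff Gf
    push_cast
    rw [if_pos hp, if_pos hp', if_pos hp']
    have ha1 : ((T:ℤ) + 1 + X)/2 - 1 = c - 1 := by omega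
    have ha2 : ((T:ℤ) + (X - 1))/2 - 1 = c - 2 := by omega
    have hb1 : ((T:ℤ) + 1) - ((T:ℤ) + 1 + X)/2 - 1 = (T:ℤ) - c := by omega
    have hb2 : (T:ℤ) - ((T:ℤ) + (X-1))/2 - 1 = (T:ℤ) - c := by omega
    rw [ha1, ha2, hb1, hb2]
    have hstep : fsum (c-1) ((T:ℤ) - c) (T+1) = fsum (c-1) ((T:ℤ) - c) T := by
      apply fsum_succ
      by_cases h : c - 1 < (T:ℤ) + 1
      · left; exact h
      · right; omega
    rw [hstep]
    have : fsum (c-1) ((T:ℤ)-c) T = fsum (c-2) ((T:ℤ)-c) T + gsum (c-2) ((T:ℤ)-c) T := by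
      have := key1 (c-2) ((T:ℤ)-c) T
      simpa [show c - 2 + 1 = c - 1 by ring] using this
    rw [this]
    have hind : (if X = (T:ℤ)+1 then (1:ℤ) else 0) = (if X - 1 = (T:ℤ) then 1 else 0) := by
      by_cases h : X = (T:ℤ)+1
      · rw [if_pos h, if_pos (by omega)]
      · rw [if_neg h, if_neg (by omega)]
    rw [hind]; ring
  · have hp' : ¬ ((X - 1) + (T:ℤ)) % 2 = 0 := by omega
    unfold Ff Gf
    push_cast
    rw [if_neg hp, if_neg hp', if_neg hp']
    ring

lemma Gf_rec (T : ℕ) (hT : 1 ≤ T) (X : ℤ) : Gf (T+1) X = Ff T (X+1) + Gf T (X+1) := by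
  by_cases hp : (X + ((T:ℤ)+1)) % 2 = 0
  · have hp' : ((X + 1) + (T:ℤ)) % 2 = 0 := by omega
    set c : ℤ := ((T:ℤ) + 1 + X)/2 with hc
    have h2c : 2 * c = (T:ℤ) + 1 + X := by omega
    unfold Ff Gf
    push_cast
    rw [if_pos hp, if_pos hp', if_pos hp']
    have ha1 : ((T:ℤ) + 1 + X)/2 - 1 = c - 1 := by omega
    have ha2 : ((T:ℤ) + (X + 1))/2 - 1 = c - 1 := by omega
    have hb1 : ((T:ℤ) + 1) - ((T:ℤ) + 1 + X)/2 - 1 = (T:ℤ) - c := by omega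
    have hb2 : (T:ℤ) - ((T:ℤ) + (X+1))/2 - 1 = (T:ℤ) - c - 1 := by omega
    rw [ha1, ha2, hb1, hb2]
    by_cases hc0 : 0 ≤ c - 1
    · have := key2 (c-1) ((T:ℤ) - c) hc0 T
      rw [this]
      have h1 : (if (T:ℤ) - c = 0 then (1:ℤ) else 0) = (if X + 1 = (T:ℤ) then 1 else 0) := by
        by_cases h : (T:ℤ) - c = 0
        · rw [if_pos h, if_pos (by omega)]
        · rw [if_neg h, if_neg (by omega)]
      have h2 : gsum (c-1) ((T:ℤ) - c - 1) (T+1) = gsum (c-1) ((T:ℤ) - c - 1) T := by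
        apply gsum_succ; right; omega
      rw [h1, h2]
    · have hneg : c - 1 < 0 := by omega
      rw [gsum_neg_left hneg, gsum_neg_left hneg, fsum_neg_left hneg,
          if_neg (by omega : ¬ X + 1 = (T:ℤ))]
      ring
  · have hp' : ¬ ((X + 1) + (T:ℤ)) % 2 = 0 := by omega
    unfold Ff Gf
    push_cast
    rw [if_neg hp, if_neg hp', if_neg hp']
    ring



lemma Ff_one (X : ℤ) : Ff 1 X = if X = 1 then 1 else 0 := by
  unfold Ff
  by_cases hp : (X + ((1:ℕ):ℤ)) % 2 = 0
  · rw [if_pos hp]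
    set c : ℤ := (((1:ℕ):ℤ) + X)/2 with hc
    have h2c : 2 * c = 1 + X := by omega
    have hfs : fsum (c - 1) (((1:ℕ):ℤ) - c - 1) 1 = 0 := by
      unfold fsum
      rw [Finset.sum_range_one]
      rcases le_or_gt 1 c with h | h
      · rw [cc_neg (by omega : ((1:ℕ):ℤ) - c - 1 < 0)]; ring
      · rw [cc_neg (by omega : c - 1 < 0)]; ring
    rw [hfs, sub_zero]
    norm_num
  · rw [if_neg hp, if_neg (by omega)]

lemma Gf_one (X : ℤ) : Gf 1 X = 0 := by
  unfold Gf
  by_cases hp : (X + ((1:ℕ):ℤ)) % 2 = 0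
  · rw [if_pos hp]
    set c : ℤ := (((1:ℕ):ℤ) + X)/2 with hc
    have h2c : 2 * c = 1 + X := by omega
    unfold gsum
    rw [Finset.sum_range_one]
    rcases le_or_gt 1 c with h | h
    · rw [cc_neg (by omega : ((1:ℕ):ℤ) - c - 1 < 0)]; ring
    · rw [cc_neg (by omega : c - 1 < 0)]; ring
  · rw [if_neg hp]

def alt (b : ℕ) : ℤ := ∑ k ∈ range (b+1), (-1)^k * ((b+2).choose k : ℤ) * (b.choose k : ℤ)
def altB (b : ℕ) : ℤ := ∑ k ∈ range (b+1), (-1)^k * ((b+4).choose k : ℤ) * (b.choose k : ℤ)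

lemma coeff_one_sub_X_pow (a k : ℕ) :
    ((1 - X : ℤ[X]) ^ a).coeff k = (-1)^k * (a.choose k : ℤ) := by
  have h : ((1:ℤ[X]) - X) = (-X) + 1 := by ring
  rw [h, add_pow, Polynomial.finset_sum_coeff]
  have hterm : ∀ i, (((-X : ℤ[X])^i * 1^(a-i) * (a.choose i : ℤ[X]))).coeff k
      = (if k = i then (-1)^i * (a.choose i : ℤ) else 0) := by
    intro i
    have e : ((-X : ℤ[X])^i * 1^(a-i) * (a.choose i : ℤ[X]))
        = Polynomial.C ((-1)^i * (a.choose i : ℤ)) * X^i := by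
      rw [neg_pow]
      rw [show ((a.choose i : ℤ[X])) = Polynomial.C ((a.choose i : ℤ)) by simp]
      rw [map_mul]
      rw [show ((-1:ℤ[X])^i) = Polynomial.C ((-1:ℤ)^i) by rw [map_pow, map_neg, map_one]]
      ring
    rw [e, Polynomial.coeff_C_mul, Polynomial.coeff_X_pow]
    split <;> ring
  rw [Finset.sum_congr rfl (fun i _ => hterm i)]
  rw [Finset.sum_ite_eq]
  by_cases hk : k ≤ a
  · rw [if_pos (Finset.mem_range.2 (by omega))]
  · rw [if_neg (by simp [Finset.mem_range]; omega), Nat.choose_eq_zero_of_lt (by omega)]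
    simp

lemma altP (a b : ℕ) : ((1 - X : ℤ[X])^a * (1+X)^b).coeff b
    = ∑ k ∈ range (b+1), (-1)^k * (a.choose k : ℤ) * (b.choose k : ℤ) := by
  rw [Polynomial.coeff_mul, Finset.Nat.sum_antidiagonal_eq_sum_range_succ_mk]
  refine Finset.sum_congr rfl fun k hk => ?_
  rw [Finset.mem_range] at hk
  rw [coeff_one_sub_X_pow, Polynomial.coeff_one_add_X_pow, Nat.choose_symm (by omega)]

lemma coeff_Q (n m : ℕ) : (((1:ℤ[X]) - X^2)^n).coeff m
    = if m % 2 = 0 ∧ m/2 ≤ n then (-1)^(m/2) * (n.choose (m/2) : ℤ) else 0 := by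
  have h : ((1:ℤ[X]) - X^2) = (-(X^2)) + 1 := by ring
  rw [h, add_pow, Polynomial.finset_sum_coeff]
  have hterm : ∀ i, (((-(X^2) : ℤ[X]))^i * 1^(n-i) * (n.choose i : ℤ[X])).coeff m
      = (if m = 2*i then (-1)^i * (n.choose i : ℤ) else 0) := by
    intro i
    have e : (((-(X^2) : ℤ[X]))^i * 1^(n-i) * (n.choose i : ℤ[X]))
        = Polynomial.C ((-1)^i * (n.choose i : ℤ)) * X^(2*i) := by
      rw [neg_pow]
      rw [show ((n.choose i : ℤ[X])) = Polynomial.C ((n.choose i : ℤ)) by simp]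
      rw [map_mul]
      rw [show ((-1:ℤ[X])^i) = Polynomial.C ((-1:ℤ)^i) by rw [map_pow, map_neg, map_one]]
      rw [show (((X:ℤ[X])^2)^i) = X^(2*i) by rw [← pow_mul, Nat.mul_comm]]
      ring
    rw [e, Polynomial.coeff_C_mul, Polynomial.coeff_X_pow]
    split <;> ring
  rw [Finset.sum_congr rfl (fun i _ => hterm i)]
  by_cases h : m % 2 = 0 ∧ m/2 ≤ n
  · rw [if_pos h]
    rw [Finset.sum_eq_single (m/2)]
    · rw [if_pos (by omega)]
    · intro i hi hne
      rw [if_neg (by omega)]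
    · intro habs
      exact absurd (Finset.mem_range.2 (by omega)) habs
  · rw [if_neg h]
    apply Finset.sum_eq_zero
    intro i hi
    rw [Finset.mem_range] at hi
    rw [if_neg (by omega)]

lemma alt_eval (i : ℕ) : alt (2*i+2)
    = (-1)^(i+1) * (((2*i+2).choose (i+1) : ℤ) - ((2*i+2).choose i : ℤ)) := by
  have h1 : alt (2*i+2) = ((1 - X : ℤ[X])^(2*i+4) * (1+X)^(2*i+2)).coeff (2*i+2) := by
    rw [altP]
    unfold alt
    refine Finset.sum_congr rfl fun k _ => ?_
    rw [show 2*i+4 = (2*i+2)+2 by ring]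
  have hfac : ((1 - X : ℤ[X])^(2*i+4) * (1+X)^(2*i+2))
      = (1-X)^2 * ((1:ℤ[X]) - X^2)^(2*i+2) := by
    rw [show (((1:ℤ[X]) - X^2)) = (1-X)*(1+X) by ring, mul_pow]
    ring
  set Q : ℤ[X] := ((1:ℤ[X]) - X^2)^(2*i+2) with hQ
  have hexp : ((1-X:ℤ[X])^2 * Q) = Q - (X^1*Q + X^1*Q) + X^2*Q := by ring
  rw [h1, hfac, hexp]
  rw [Polynomial.coeff_add, Polynomial.coeff_sub, Polynomial.coeff_add]
  rw [Polynomial.coeff_X_pow_mul', Polynomial.coeff_X_pow_mul']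
  rw [if_pos (by omega), if_pos (by omega)]
  rw [show 2*i+2-1 = 2*i+1 by omega, show 2*i+2-2 = 2*i by omega]
  rw [hQ, coeff_Q, coeff_Q, coeff_Q]
  rw [if_pos (by omega), if_neg (by omega), if_pos (by omega)]
  rw [show (2*i+2)/2 = i+1 by omega, show (2*i)/2 = i by omega]
  rw [pow_succ]
  ring

lemma altB_eval (p : ℕ) : altB (2*p+5)
    = 4 * ((-1)^(p+1) * (((2*p+5).choose (p+2) : ℤ) - ((2*p+5).choose (p+1) : ℤ))) := by
  have h1 : altB (2*p+5) = ((1 - X : ℤ[X])^(2*p+9) * (1+X)^(2*p+5)).coeff (2*p+5) := by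
    rw [altP]
    unfold altB
    refine Finset.sum_congr rfl fun k _ => ?_
    rw [show 2*p+9 = (2*p+5)+4 by ring]
  have hfac : ((1 - X : ℤ[X])^(2*p+9) * (1+X)^(2*p+5))
      = (1-X)^4 * ((1:ℤ[X]) - X^2)^(2*p+5) := by
    rw [show (((1:ℤ[X]) - X^2)) = (1-X)*(1+X) by ring, mul_pow]
    ring
  set Q : ℤ[X] := ((1:ℤ[X]) - X^2)^(2*p+5) with hQ
  have hexp : ((1-X:ℤ[X])^4 * Q)
      = Q - (X^1*Q + X^1*Q + X^1*Q + X^1*Q)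
        + (X^2*Q + X^2*Q + X^2*Q + X^2*Q + X^2*Q + X^2*Q)
        - (X^3*Q + X^3*Q + X^3*Q + X^3*Q) + X^4*Q := by ring
  rw [h1, hfac, hexp]
  simp only [Polynomial.coeff_add, Polynomial.coeff_sub, Polynomial.coeff_X_pow_mul']
  rw [if_pos (by omega : 1 ≤ 2*p+5), if_pos (by omega : 2 ≤ 2*p+5),
    if_pos (by omega : 3 ≤ 2*p+5), if_pos (by omega : 4 ≤ 2*p+5)]
  rw [show 2*p+5-1 = 2*p+4 by omega, show 2*p+5-2 = 2*p+3 by omega,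
    show 2*p+5-3 = 2*p+2 by omega, show 2*p+5-4 = 2*p+1 by omega]
  rw [hQ, coeff_Q, coeff_Q, coeff_Q, coeff_Q, coeff_Q]
  rw [if_neg (by omega), if_pos (by omega), if_neg (by omega), if_pos (by omega),
    if_neg (by omega)]
  rw [show (2*p+4)/2 = p+2 by omega, show (2*p+2)/2 = p+1 by omega]
  rw [pow_succ, pow_succ]
  ring

lemma alt_zero : alt 0 = 1 := by decide

lemma alt_ne (j : ℕ) : alt (2*j) ≠ 0 := by
  cases j with
  | zero => rw [show 2*0 = 0 by ring, alt_zero]; norm_num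
  | succ i =>
    rw [show 2*(i+1) = 2*i+2 by ring, alt_eval]
    have hlt : (2*i+2).choose i < (2*i+2).choose (i+1) := by
      have h := Nat.choose_succ_right_eq (2*i+2) i
      have hpos : 0 < (2*i+2).choose i := Nat.choose_pos (by omega)
      have : (2*i+2).choose (i+1) * (i+1) = (2*i+2).choose i * (i+2) := by
        rw [h]; congr 1; omega
      nlinarith
    have : ((2*i+2).choose (i+1) : ℤ) - ((2*i+2).choose i : ℤ) ≠ 0 := by
      have : ((2*i+2).choose i : ℤ) < ((2*i+2).choose (i+1) : ℤ) := by exact_mod_cast hlt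
      omega
    intro habs
    rcases mul_eq_zero.1 habs with h | h
    · exact absurd h (by positivity)
    · exact this h

lemma altB_eq (j : ℕ) (hj : 1 ≤ j) : altB (2*j-1) = 4 * alt (2*j) := by
  match j, hj with
  | 1, _ => decide
  | 2, _ => decide
  | (p+3), _ =>
    rw [show 2*(p+3)-1 = 2*p+5 by omega, show 2*(p+3) = 2*(p+2)+2 by ring,
      altB_eval, alt_eval]
    have hA : (2*(p+2)+2).choose (p+3) = (2*p+5).choose (p+2) + (2*p+5).choose (p+3) := by
      rw [show 2*(p+2)+2 = (2*p+5)+1 by ring]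
      exact Nat.choose_succ_succ (2*p+5) (p+2)
    have hB : (2*(p+2)+2).choose (p+2) = (2*p+5).choose (p+1) + (2*p+5).choose (p+2) := by
      rw [show 2*(p+2)+2 = (2*p+5)+1 by ring]
      exact Nat.choose_succ_succ (2*p+5) (p+1)
    have hC : (2*p+5).choose (p+3) = (2*p+5).choose (p+2) := by
      rw [← Nat.choose_symm (show p+2 ≤ 2*p+5 by omega)]
      congr 1
      omega
    rw [show p+2+1 = p+3 by ring, hA, hB, hC]
    have hsign : ((-1:ℤ))^(p+2+1) = (-1)^(p+1) := by
      rw [show p+2+1 = (p+1)+2 by ring, pow_add]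
      norm_num
    rw [hsign]
    push_cast
    ring


noncomputable def Sr (T : ℕ) (X : ℤ) : ℂ :=
  ∑ R ∈ (Finset.range T).powerset,
    if 0 ∈ R ∧ 2 * (R.card : ℤ) - (T : ℤ) = X ∧ (T - 1) ∈ R then
      (-Complex.I) ^ turnsOf T R else 0

noncomputable def Sl (T : ℕ) (X : ℤ) : ℂ :=
  ∑ R ∈ (Finset.range T).powerset,
    if 0 ∈ R ∧ 2 * (R.card : ℤ) - (T : ℤ) = X ∧ ¬((T - 1) ∈ R) then
      (-Complex.I) ^ turnsOf T R else 0

lemma turnsOf_congr (T : ℕ) (R R' : Finset ℕ) (h : ∀ i, i < T → (i ∈ R ↔ i ∈ R')) :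
    turnsOf T R = turnsOf T R' := by
  unfold turnsOf
  congr 1
  apply Finset.filter_congr
  intro i hi
  rw [Finset.mem_Ico] at hi
  rw [h i hi.2, h (i-1) (by omega)]

lemma turnsOf_succ (T : ℕ) (hT : 1 ≤ T) (R : Finset ℕ) :
    turnsOf (T+1) R = turnsOf T R + (if ¬((T ∈ R) ↔ (T - 1 ∈ R)) then 1 else 0) := by
  unfold turnsOf
  rw [Nat.Ico_succ_right_eq_insert_Ico hT, Finset.filter_insert]
  by_cases h : ¬((T ∈ R) ↔ (T - 1 ∈ R))
  · rw [if_pos h, if_pos h,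
      Finset.card_insert_of_notMem (fun hc => by
        have := (Finset.mem_filter.1 hc).1
        rw [Finset.mem_Ico] at this
        omega)]
  · rw [if_neg h, if_neg h, add_zero]

lemma waveA_split (T : ℕ) (X : ℤ) :
    waveA X T 1 = (((2:ℝ) ^ ((1 - (T : ℝ)) / 2) : ℝ) : ℂ) * Complex.I * (Sr T X + Sl T X) := by
  unfold waveA Sr Sl
  have h2 : ((1:ℝ) + (1:ℝ)^2) = 2 := by norm_num
  rw [h2]
  congr 1
  rw [← Finset.sum_add_distrib]
  refine Finset.sum_congr rfl fun R _ => ?_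
  have hμ : (-Complex.I * ((1:ℝ):ℂ)) = -Complex.I := by simp
  rw [hμ]
  by_cases hA : 0 ∈ R ∧ 2 * (R.card : ℤ) - (T : ℤ) = X
  · by_cases hQ : (T - 1) ∈ R
    · rw [if_pos hA, if_pos ⟨hA.1, hA.2, hQ⟩, if_neg (by tauto), add_zero]
    · rw [if_pos hA, if_neg (by tauto), if_pos ⟨hA.1, hA.2, hQ⟩, zero_add]
  · rw [if_neg hA, if_neg (by tauto), if_neg (by tauto), add_zero]

lemma Sr_rec (T : ℕ) (hT : 1 ≤ T) (X : ℤ) :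
    Sr (T+1) X = Sr T (X-1) + (-Complex.I) * Sl T (X-1) := by
  unfold Sr Sl
  rw [Finset.range_add_one, Finset.sum_powerset_insert (Finset.notMem_range_self)]
  have hzero : ∀ R ∈ (Finset.range T).powerset,
      (if 0 ∈ R ∧ 2 * (R.card : ℤ) - ((T+1 : ℕ) : ℤ) = X ∧ ((T+1) - 1) ∈ R then
        (-Complex.I) ^ turnsOf (T+1) R else 0) = 0 := by
    intro R hR
    rw [Finset.mem_powerset] at hR
    have : (T+1) - 1 = T := by omega
    rw [this]
    have hTR : T ∉ R := fun h => by have := hR h; simp at this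
    rw [if_neg (by tauto)]
  rw [Finset.sum_congr rfl hzero, Finset.sum_const_zero, zero_add]
  rw [Finset.mul_sum, ← Finset.sum_add_distrib]
  refine Finset.sum_congr rfl fun R hR => ?_
  rw [Finset.mem_powerset] at hR
  have hTR : T ∉ R := fun h => by have := hR h; simp at this
  have hT1 : (T+1) - 1 = T := by omega
  have h0i : 0 ∈ insert T R ↔ 0 ∈ R := by
    rw [Finset.mem_insert]
    constructor
    · rintro (h | h); · omega
      · exact h
    · exact fun h => Or.inr h
  have hcard : ((insert T R).card : ℤ) = (R.card : ℤ) + 1 := by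
    rw [Finset.card_insert_of_notMem hTR]; push_cast; ring
  have hmem : T ∈ insert T R := Finset.mem_insert_self T R
  have hT1mem : (T - 1) ∈ insert T R ↔ (T - 1) ∈ R := by
    rw [Finset.mem_insert]
    constructor
    · rintro (h | h); · omega
      · exact h
    · exact fun h => Or.inr h
  have hturns : turnsOf (T+1) (insert T R)
      = turnsOf T R + (if ¬((T - 1) ∈ R) then 1 else 0) := by
    rw [turnsOf_succ T hT]
    have h1 : turnsOf T (insert T R) = turnsOf T R := by
      apply turnsOf_congr
      intro i hi
      rw [Finset.mem_insert]
      constructor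
      · rintro (h | h); · omega
        · exact h
      · exact fun h => Or.inr h
    rw [h1]
    congr 1
    by_cases hd : (T - 1) ∈ R
    · rw [if_neg (by rw [hT1mem]; tauto), if_neg (by tauto)]
    · rw [if_pos (by rw [hT1mem]; tauto), if_pos (by tauto)]
  have hcond : (0 ∈ insert T R ∧ 2 * ((insert T R).card : ℤ) - ((T+1 : ℕ) : ℤ) = X
        ∧ ((T+1) - 1) ∈ insert T R)
      ↔ (0 ∈ R ∧ 2 * (R.card : ℤ) - (T : ℤ) = X - 1) := by
    rw [hT1, h0i, hcard]
    constructor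
    · rintro ⟨h1, h2, _⟩
      exact ⟨h1, by push_cast at h2 ⊢; omega⟩
    · rintro ⟨h1, h2⟩
      exact ⟨h1, by push_cast; omega, hmem⟩
  by_cases hA : 0 ∈ R ∧ 2 * (R.card : ℤ) - (T : ℤ) = X - 1
  · rw [if_pos (hcond.2 hA), hturns]
    by_cases hd : (T - 1) ∈ R
    · rw [if_neg (by tauto), if_pos ⟨hA.1, hA.2, hd⟩, if_neg (by tauto),
        mul_zero, add_zero, add_zero]
    · rw [if_pos (by tauto), if_neg (by tauto), if_pos ⟨hA.1, hA.2, hd⟩,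
        zero_add, pow_succ]
      ring
  · rw [if_neg (fun h => hA (hcond.1 h)), if_neg (by tauto), if_neg (by tauto)]
    simp


lemma Sl_rec (T : ℕ) (hT : 1 ≤ T) (X : ℤ) :
    Sl (T+1) X = Sl T (X+1) + (-Complex.I) * Sr T (X+1) := by
  unfold Sr Sl
  rw [Finset.range_add_one, Finset.sum_powerset_insert (Finset.notMem_range_self)]
  have hT1 : (T+1) - 1 = T := by omega
  have hzero : ∀ R ∈ (Finset.range T).powerset,
      (if 0 ∈ insert T R ∧ 2 * ((insert T R).card : ℤ) - ((T+1 : ℕ) : ℤ) = X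
          ∧ ¬(((T+1) - 1) ∈ insert T R) then
        (-Complex.I) ^ turnsOf (T+1) (insert T R) else 0) = 0 := by
    intro R hR
    rw [if_neg (by rw [hT1]; intro h; exact h.2.2 (Finset.mem_insert_self T R))]
  rw [Finset.sum_congr rfl hzero, Finset.sum_const_zero, add_zero]
  rw [Finset.mul_sum, ← Finset.sum_add_distrib]
  refine Finset.sum_congr rfl fun R hR => ?_
  rw [Finset.mem_powerset] at hR
  have hTR : T ∉ R := fun h => by have := hR h; simp at this
  have hturns : turnsOf (T+1) R = turnsOf T R + (if (T - 1) ∈ R then 1 else 0) := by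
    rw [turnsOf_succ T hT]
    congr 1
    by_cases hd : (T - 1) ∈ R
    · rw [if_pos (by tauto), if_pos hd]
    · rw [if_neg (by tauto), if_neg hd]
  have hcond : (0 ∈ R ∧ 2 * (R.card : ℤ) - ((T+1 : ℕ) : ℤ) = X ∧ ¬(((T+1) - 1) ∈ R))
      ↔ (0 ∈ R ∧ 2 * (R.card : ℤ) - (T : ℤ) = X + 1) := by
    rw [hT1]
    constructor
    · rintro ⟨h1, h2, _⟩
      exact ⟨h1, by push_cast at h2 ⊢; omega⟩
    · rintro ⟨h1, h2⟩
      exact ⟨h1, by push_cast; omega, hTR⟩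
  by_cases hA : 0 ∈ R ∧ 2 * (R.card : ℤ) - (T : ℤ) = X + 1
  · rw [if_pos (hcond.2 hA), hturns]
    by_cases hd : (T - 1) ∈ R
    · rw [if_pos hd, if_neg (by tauto), if_pos ⟨hA.1, hA.2, hd⟩, zero_add, pow_succ]
      ring
    · rw [if_neg hd, if_pos ⟨hA.1, hA.2, hd⟩, if_neg (by tauto),
        mul_zero, add_zero, add_zero]
  · rw [if_neg (fun h => hA (hcond.1 h)), if_neg (by tauto), if_neg (by tauto)]
    simp

lemma Sr_one (X : ℤ) : Sr 1 X = if X = 1 then 1 else 0 := by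
  unfold Sr
  rw [Finset.range_one, show ({0} : Finset ℕ) = insert 0 ∅ from rfl,
    Finset.sum_powerset_insert (by simp), Finset.powerset_empty,
    Finset.sum_singleton, Finset.sum_singleton, Finset.insert_empty]
  have h1 : (0:ℕ) ∈ ({0} : Finset ℕ) := Finset.mem_singleton_self 0
  have hturns : turnsOf 1 ({0} : Finset ℕ) = 0 := by
    unfold turnsOf
    simp
  by_cases hX : X = 1
  · rw [if_neg (by simp), if_pos ⟨h1, by simp [hX], by simpa using h1⟩, hturns,
      if_pos hX]
    simp
  · rw [if_neg (by simp), if_neg (by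
      rintro ⟨_, h2, _⟩
      simp at h2
      omega), if_neg hX]
    simp

lemma Sl_one (X : ℤ) : Sl 1 X = 0 := by
  unfold Sl
  rw [Finset.range_one, show ({0} : Finset ℕ) = insert 0 ∅ from rfl,
    Finset.sum_powerset_insert (by simp), Finset.powerset_empty,
    Finset.sum_singleton, Finset.sum_singleton, Finset.insert_empty]
  rw [if_neg (by simp), if_neg (by
    rintro ⟨h1, _, h3⟩
    exact h3 (by simpa using h1))]
  simp



lemma closed : ∀ T, 1 ≤ T → ∀ X : ℤ,
    Sr T X = (Ff T X : ℂ) ∧ Sl T X = -Complex.I * (Gf T X : ℂ) := by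
  intro T hT
  induction T, hT using Nat.le_induction with
  | base =>
    intro X
    refine ⟨?_, ?_⟩
    · rw [Sr_one, Ff_one]
      split <;> simp
    · rw [Sl_one, Gf_one]
      simp
  | succ T hT ih =>
    intro X
    have hII : ∀ g : ℂ, (-Complex.I) * (-Complex.I * g) = -g := fun g => by
      rw [← mul_assoc, neg_mul_neg, Complex.I_mul_I]
      ring
    refine ⟨?_, ?_⟩
    · rw [Sr_rec T hT, (ih (X-1)).1, (ih (X-1)).2, Ff_rec T hT X, hII]
      push_cast
      ring
    · rw [Sl_rec T hT, (ih (X+1)).1, (ih (X+1)).2, Gf_rec T hT X]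
      push_cast
      ring

lemma waveA_re (T : ℕ) (hT : 1 ≤ T) (X : ℤ) :
    (waveA X T 1).re = (2:ℝ) ^ ((1 - (T:ℝ))/2) * ((Gf T X : ℤ) : ℝ) := by
  rw [waveA_split, (closed T hT X).1, (closed T hT X).2]
  set r : ℝ := (2:ℝ) ^ ((1 - (T:ℝ))/2) with hr
  have key : (↑r * Complex.I * ((Ff T X : ℂ) + -Complex.I * (Gf T X : ℂ)))
      = Complex.ofReal (r * ((Gf T X : ℤ) : ℝ))
        + Complex.ofReal (r * ((Ff T X : ℤ) : ℝ)) * Complex.I := by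
    push_cast
    ring_nf
    rw [Complex.I_sq]
    ring
  rw [key]
  simp


set_option linter.unusedTactic false in
lemma gsum_stable (a b : ℤ) (M N : ℕ) (hM : b < (M:ℤ)) (h : M ≤ N) :
    gsum a b N = gsum a b M := by
  induction N, h using Nat.le_induction with
  | base => rfl
  | succ n hn ih =>
    rw [gsum_succ (Or.inr (by push_cast at hM ⊢; omega)), ih]

lemma Gf_two (j : ℕ) : Gf (4*j+4) 2 = alt (2*j) := by
  unfold Gf
  rw [if_pos (by push_cast; omega)]
  have hc : ((((4*j+4 : ℕ):ℤ)) + 2)/2 - 1 = ((2*j+2 : ℕ) : ℤ) := by push_cast; omega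
  have hb : (((4*j+4 : ℕ):ℤ)) - ((((4*j+4 : ℕ):ℤ)) + 2)/2 - 1 = ((2*j : ℕ) : ℤ) := by
    push_cast; omega
  rw [hc, hb, gsum_stable _ _ (2*j+1) _ (by push_cast; omega) (by omega)]
  unfold gsum alt
  refine Finset.sum_congr rfl fun k _ => ?_
  rw [cc_ofNat, cc_ofNat]

lemma Gf_four (j : ℕ) (hj : 1 ≤ j) : Gf (4*j+4) 4 = altB (2*j-1) := by
  unfold Gf
  rw [if_pos (by push_cast; omega)]
  have hc : ((((4*j+4 : ℕ):ℤ)) + 4)/2 - 1 = (((2*j-1)+4 : ℕ) : ℤ) := by push_cast; omega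
  have hb : (((4*j+4 : ℕ):ℤ)) - ((((4*j+4 : ℕ):ℤ)) + 4)/2 - 1 = ((2*j-1 : ℕ) : ℤ) := by
    push_cast; omega
  rw [hc, hb, gsum_stable _ _ ((2*j-1)+1) _ (by push_cast; omega) (by omega)]
  unfold gsum altB
  refine Finset.sum_congr rfl fun k _ => ?_
  rw [cc_ofNat, cc_ofNat]
lemma a1_int (x t : ℤ) (ht : 0 < t) :
    a1 ((x:ℤ):ℝ) ((t:ℤ):ℝ) 1 1
      = (2:ℝ) ^ ((1 - (((t+1).toNat : ℕ) : ℝ))/2) * ((Gf (t+1).toNat x : ℤ) : ℝ) := by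
  unfold a1 wf
  have h1 : (((x:ℤ):ℝ)/1) = ((x:ℤ):ℝ) := div_one _
  have h2 : ((((t:ℤ):ℝ)+1)/1) = (((t+1:ℤ)):ℝ) := by push_cast; ring
  rw [h1, h2, Int.floor_intCast, Int.floor_intCast, show (1:ℝ)*(1:ℝ) = 1 by norm_num]
  exact waveA_re _ (by omega) x

lemma a1_two (t : ℤ) (ht : 0 < t) (j : ℕ) (hj : (t:ℤ) = 4*(j:ℤ)+3) :
    a1 2 ((t:ℤ):ℝ) 1 1
      = (2:ℝ) ^ ((1 - (((t+1).toNat : ℕ) : ℝ))/2) * ((alt (2*j) : ℤ) : ℝ) := by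
  have h := a1_int 2 t ht
  rw [show (((2:ℤ)):ℝ) = (2:ℝ) by norm_num] at h
  rw [h, show (t+1).toNat = 4*j+4 by omega, Gf_two]

lemma a1_four (t : ℤ) (ht : 0 < t) (j : ℕ) (hj : (t:ℤ) = 4*(j:ℤ)+3) (hj1 : 1 ≤ j) :
    a1 4 ((t:ℤ):ℝ) 1 1
      = (2:ℝ) ^ ((1 - (((t+1).toNat : ℕ) : ℝ))/2) * ((altB (2*j-1) : ℤ) : ℝ) := by
  have h := a1_int 4 t ht
  rw [show (((4:ℤ)):ℝ) = (4:ℝ) by norm_num] at h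
  rw [h, show (t+1).toNat = 4*j+4 by omega, Gf_four j hj1]

end FC


theorem stmt6 :
    (∀ t : ℤ, 0 < t → t % 4 = 3 → a1 2 (t : ℝ) 1 1 ≠ 0) ∧
    Filter.Tendsto (fun t : ℤ => a1 4 (t : ℝ) 1 1 / a1 2 (t : ℝ) 1 1)
      (Filter.atTop ⊓ Filter.principal {t : ℤ | t % 4 = 3}) (nhds 4) := by
  constructor
  · intro t ht hm
    obtain ⟨j, hj⟩ : ∃ j : ℕ, (t:ℤ) = 4*(j:ℤ)+3 := ⟨((t-3)/4).toNat, by omega⟩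
    rw [FC.a1_two t ht j hj]
    apply mul_ne_zero
    · exact ne_of_gt (Real.rpow_pos_of_pos (by norm_num) _)
    · exact_mod_cast FC.alt_ne j
  · have hev : (fun _ : ℤ => (4:ℝ))
        =ᶠ[Filter.atTop ⊓ Filter.principal {t : ℤ | t % 4 = 3}]
        (fun t : ℤ => a1 4 (t : ℝ) 1 1 / a1 2 (t : ℝ) 1 1) := by
      refine Filter.eventually_inf_principal.2 ?_
      filter_upwards [Filter.eventually_ge_atTop (7:ℤ)] with t ht7 hmem
      have hm : t % 4 = 3 := hmem
      have ht : 0 < t := by omega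
      obtain ⟨j, hj⟩ : ∃ j : ℕ, (t:ℤ) = 4*(j:ℤ)+3 := ⟨((t-3)/4).toNat, by omega⟩
      have hj1 : 1 ≤ j := by omega
      rw [FC.a1_two t ht j hj, FC.a1_four t ht j hj hj1, FC.altB_eq j hj1]
      have hA : ((FC.alt (2*j) : ℤ):ℝ) ≠ 0 := by exact_mod_cast FC.alt_ne j
      have he : (2:ℝ) ^ ((1 - (((t+1).toNat : ℕ) : ℝ))/2) ≠ 0 :=
        ne_of_gt (Real.rpow_pos_of_pos (by norm_num) _)
      rw [eq_div_iff (mul_ne_zero he hA)]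
      push_cast
      ring
    exact Filter.Tendsto.congr' hev tendsto_const_nhds
end

section
/- Let m > 0, let T ≥ 1 be an integer, let v ∈ (−1/√(1+m²), 1/√(1+m²)), and let (x_t) be an integer sequence with x_t = v·t + o(√t) as t → ∞. Then the sequence δ_t^− converges (namely δ_t^− → −2T·arcsin(mv/√(1−v²))); moreover, ρ_{2π}(0, δ_t^−) → 0 as t → ∞ if and only if v = sin(πk/T)/√(m² + sin²(πk/T)) for some integer k with −T/2 < k < T/2. -/
/-!
For `ε = 1` the phase is `θ(x, t) = t · F(x / t) + π / 4`, where `F' = -φ` with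
`φ(u) = arcsin (m u / √(1 - u²))` on `(1 + m²) u² < 1`. The two arguments `x_t / t` and
`(x_t - 2T) / t` both tend to `v` and differ by exactly `2T / t`, so strict differentiability of
`F` at `v` gives `δ_t^- → -2T φ(v)`.

`ρ_p(0, ·)` is the norm of `ℝ ⧸ pℤ`, hence continuous, so `ρ_{2π}(0, δ_t^-) → 0` iff
`-2T φ(v) ∈ 2πℤ`, i.e. `φ(v) = πk / T` for an integer `k`. As `|φ(v)| < π / 2` this forces
`|k| < T / 2`, and inverting `u ↦ m u / √(1 - u²)` (the inverse is `s ↦ s / √(m² + s²)`)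
turns `sin φ(v) = sin (πk / T)` into the stated formula for `v`.
-/

open Complex Real Filter Asymptotics

/-- The phase `θ(x, t, m, ε)`. -/
noncomputable def theta (x t m ε : ℝ) : ℝ :=
  (t / ε) *
      (Real.arcsin (m * ε / Real.sqrt ((1 + m ^ 2 * ε ^ 2) * (1 - (x / t) ^ 2))) -
        (x / t) * Real.arcsin (m * ε * (x / t) / Real.sqrt (1 - (x / t) ^ 2))) +
    π / 4

/-- `ρ_p(a, b)`: the distance from `b − a` to the nearest point of `pℤ`. -/
noncomputable def rho (p a b : ℝ) : ℝ := ⨅ k : ℤ, |b - a - p * k|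

/-- `δ_t^− = θ(x_t, t, m) − θ(x_t − 2T, t, m)` (lattice step `ε = 1`). -/
noncomputable def deltaMinus (m : ℝ) (T : ℕ) (x : ℕ → ℤ) (t : ℕ) : ℝ :=
  theta (x t : ℝ) (t : ℝ) m 1 - theta ((x t : ℝ) - 2 * T) (t : ℝ) m 1

/-- `δ_t^+ = θ(x_t, t, m) + θ(x_t − 2T, t, m)` (lattice step `ε = 1`). -/
noncomputable def deltaPlus (m : ℝ) (T : ℕ) (x : ℕ → ℤ) (t : ℕ) : ℝ :=
  theta (x t : ℝ) (t : ℝ) m 1 + theta ((x t : ℝ) - 2 * T) (t : ℝ) m 1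

/-- `γ_t = min {ρ_{2π}(0, δ_t^−), ρ_{2π}(π, δ_t^+)}`. -/
noncomputable def gammaSeq (m : ℝ) (T : ℕ) (x : ℕ → ℤ) (t : ℕ) : ℝ :=
  min (rho (2 * π) 0 (deltaMinus m T x t)) (rho (2 * π) π (deltaPlus m T x t))


open Topology

lemma rho_zero_eq_norm (p y : ℝ) : rho p 0 y = ‖(y : AddCircle p)‖ := by
  have hbdd : BddBelow (Set.range fun k : ℤ => |y - 0 - p * k|) :=
    ⟨0, by rintro _ ⟨k, rfl⟩; positivity⟩
  refine le_antisymm ?_ (le_ciInf fun k => ?_)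
  · rw [AddCircle.norm_eq, mul_comm _ p]
    simpa only [rho, sub_zero] using ciInf_le hbdd (round (p⁻¹ * y))
  · have hk : (y : AddCircle p) = ((y - 0 - p * k : ℝ) : AddCircle p) := by
      rw [sub_zero, AddCircle.coe_sub, mul_comm, ← zsmul_eq_mul, AddCircle.coe_zsmul,
        AddCircle.coe_period, smul_zero, sub_zero]
    rw [hk]
    exact QuotientAddGroup.norm_mk_le_norm

lemma rho_zero_eq_zero_iff (p y : ℝ) :
    rho p 0 y = 0 ↔ ∃ n : ℤ, n * p = y := by
  simp only [rho_zero_eq_norm p, norm_eq_zero, AddCircle.coe_eq_zero_iff, zsmul_eq_mul]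

lemma continuous_rho_zero (p : ℝ) : Continuous (rho p 0) := by
  rw [funext (rho_zero_eq_norm p)]
  exact continuous_norm.comp (AddCircle.continuous_mk' p)

lemma tendsto_rho_zero_nhds_zero_iff {α : Type*} {l : Filter α} [l.NeBot] {p L : ℝ}
    {f : α → ℝ} (hf : Tendsto f l (𝓝 L)) :
    Tendsto (fun a => rho p 0 (f a)) l (𝓝 0) ↔ rho p 0 L = 0 := by
  have hlim := ((continuous_rho_zero p).tendsto L).comp hf
  exact ⟨fun h0 => tendsto_nhds_unique hlim h0, fun hL => by rwa [hL] at hlim⟩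

lemma HasStrictDerivAt.tendsto_mul_sub {α : Type*} {l : Filter α} {f : ℝ → ℝ} {f' v c : ℝ}
    (hf : HasStrictDerivAt f f' v) {a b s : α → ℝ} (ha : Tendsto a l (𝓝 v))
    (hb : Tendsto b l (𝓝 v)) (hs : ∀ᶠ n in l, s n * (a n - b n) = c) :
    Tendsto (fun n => s n * (f (a n) - f (b n))) l (𝓝 (c * f')) := by
  have hlin : (fun n => f (a n) - f (b n) - (a n - b n) * f') =o[l] fun n => a n - b n := by
    have := (hasStrictFDerivAt_iff_isLittleO.1 hf).comp_tendsto (ha.prodMk_nhds hb)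
    simpa [Function.comp_def] using this
  have hscaled : (fun n => s n * (f (a n) - f (b n) - (a n - b n) * f')) =o[l] fun _ => (1 : ℝ) :=
    ((isBigO_refl s l).mul_isLittleO hlin).trans_isBigO
      ((isBigO_const_one ℝ c l).congr' (hs.mono fun _ h => h.symm) .rfl)
  have hsum := ((isLittleO_one_iff ℝ).1 hscaled).add_const (c * f')
  rw [zero_add] at hsum
  refine hsum.congr' (hs.mono fun n h => ?_)
  rw [← h]
  ring

lemma div_sqrt_mem_Ioo {z c : ℝ} (h : z ^ 2 < c) : z / √c ∈ Set.Ioo (-1) 1 := by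
  have hc : 0 < c := (sq_nonneg z).trans_lt h
  rw [Set.mem_Ioo, ← abs_lt, ← sq_lt_one_iff_abs_lt_one, div_pow, Real.sq_sqrt hc.le,
    div_lt_one hc]
  exact h

lemma sqrt_one_sub_div_sqrt_sq {c : ℝ} (hc : 0 < c) (z : ℝ) :
    √(1 - (z / √c) ^ 2) = √(c - z ^ 2) / √c := by
  rw [div_pow, Real.sq_sqrt hc.le, one_sub_div hc.ne', Real.sqrt_div' _ hc.le]

lemma HasDerivAt.arcsin_div_sqrt {f g : ℝ → ℝ} {f' g' u : ℝ} (hf : HasDerivAt f f' u)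
    (hg : HasDerivAt g g' u) (hfg : f u ^ 2 < g u) :
    HasDerivAt (fun y => arcsin (f y / √(g y)))
      ((2 * f' * g u - f u * g') / (2 * g u * √(g u - f u ^ 2))) u := by
  have hg0 : 0 < g u := (sq_nonneg _).trans_lt hfg
  have hmem := div_sqrt_mem_Ioo hfg
  have h := (hasDerivAt_arcsin hmem.1.ne' hmem.2.ne).comp u (hf.div (hg.sqrt hg0.ne')
    (Real.sqrt_pos.2 hg0).ne')
  refine h.congr_deriv ?_
  rw [sqrt_one_sub_div_sqrt_sq hg0]
  field_simp
  rw [Real.sq_sqrt hg0.le]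

noncomputable def phaseAngle (m u : ℝ) : ℝ := arcsin (m * u / √(1 - u ^ 2))

noncomputable def phaseProfile (m u : ℝ) : ℝ :=
  arcsin (m / √((1 + m ^ 2) * (1 - u ^ 2))) - u * phaseAngle m u

lemma theta_one (x t m : ℝ) : theta x t m 1 = t * phaseProfile m (x / t) + π / 4 := by
  simp [theta, phaseProfile, phaseAngle]

lemma hasDerivAt_phaseProfile {m u : ℝ} (hu : (1 + m ^ 2) * u ^ 2 < 1) :
    HasDerivAt (phaseProfile m) (-phaseAngle m u) u := by
  have hlin : HasDerivAt (fun y => m * y) m u := by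
    simpa using (hasDerivAt_id u).const_mul m
  have hquad : HasDerivAt (fun y => 1 - y ^ 2) (-(2 * u)) u := by
    simpa using (hasDerivAt_pow 2 u).const_sub 1
  have hangle := hlin.arcsin_div_sqrt hquad (by nlinarith)
  have hfirst := (hasDerivAt_const u m).arcsin_div_sqrt (hquad.const_mul (1 + m ^ 2))
    (by nlinarith)
  refine (hfirst.sub ((hasDerivAt_id u).mul hangle)).congr_deriv ?_
  rw [show (1 + m ^ 2) * (1 - u ^ 2) - m ^ 2 = 1 - u ^ 2 - (m * u) ^ 2 by ring]
  simp only [phaseAngle, id]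
  field_simp
  ring

lemma continuousAt_phaseAngle (m : ℝ) {u : ℝ} (hu : u ^ 2 < 1) :
    ContinuousAt (phaseAngle m) u :=
  continuous_arcsin.continuousAt.comp <| ContinuousAt.div (by fun_prop) (by fun_prop)
    (Real.sqrt_pos.2 (by linarith)).ne'

lemma hasStrictDerivAt_phaseProfile {m u : ℝ} (hu : (1 + m ^ 2) * u ^ 2 < 1) :
    HasStrictDerivAt (phaseProfile m) (-phaseAngle m u) u := by
  have hnear : ∀ᶠ y in 𝓝 u, (1 + m ^ 2) * y ^ 2 < 1 :=
    (isOpen_lt (by fun_prop) continuous_const).mem_nhds hu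
  exact hasStrictDerivAt_of_hasDerivAt_of_continuousAt
    (hnear.mono fun y hy => hasDerivAt_phaseProfile hy)
    (continuousAt_phaseAngle m (by nlinarith)).neg

lemma tendsto_div_of_isLittleO_rpow {y : ℕ → ℝ} {v r : ℝ} (hr : r ≤ 1)
    (hy : (fun t : ℕ => y t - v * t) =o[atTop] fun t : ℕ => (t : ℝ) ^ r) :
    Tendsto (fun t : ℕ => y t / t) atTop (𝓝 v) := by
  have hrpow : (fun t : ℕ => (t : ℝ) ^ r) =O[atTop] fun t : ℕ => (t : ℝ) := by
    refine IsBigO.of_bound 1 ?_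
    filter_upwards [eventually_ge_atTop 1] with t ht
    have ht1 : (1 : ℝ) ≤ t := by exact_mod_cast ht
    rw [one_mul, Real.norm_of_nonneg (by positivity), Real.norm_of_nonneg (by positivity)]
    exact Real.rpow_le_self_of_one_le ht1 hr
  have hlim := ((hy.trans_isBigO hrpow).tendsto_div_nhds_zero).const_add v
  rw [add_zero] at hlim
  refine hlim.congr' ?_
  filter_upwards [eventually_ne_atTop 0] with t ht
  field_simp
  ring

lemma tendsto_deltaMinus {m v : ℝ} (T : ℕ) (hv : (1 + m ^ 2) * v ^ 2 < 1) {x : ℕ → ℤ}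
    (hx : Tendsto (fun t : ℕ => (x t : ℝ) / t) atTop (𝓝 v)) :
    Tendsto (deltaMinus m T x) atTop (𝓝 (-2 * T * phaseAngle m v)) := by
  have hx' : Tendsto (fun t : ℕ => ((x t : ℝ) - 2 * T) / t) atTop (𝓝 v) := by
    simpa only [sub_div, sub_zero] using
      hx.sub (tendsto_const_div_atTop_nhds_zero_nat (2 * T : ℝ))
  have hstep : ∀ᶠ t : ℕ in atTop,
      (t : ℝ) * ((x t : ℝ) / t - ((x t : ℝ) - 2 * T) / t) = 2 * T := by
    filter_upwards [eventually_ne_atTop 0] with t ht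
    field_simp
    ring
  have hlim := (hasStrictDerivAt_phaseProfile hv).tendsto_mul_sub hx hx' hstep
  convert hlim using 2
  · simp only [deltaMinus, theta_one]
    ring
  · ring

lemma mul_sq_lt_one_of_mem_Ioo {c v : ℝ} (hc : 0 < c)
    (hv : v ∈ Set.Ioo (-(1 / √c)) (1 / √c)) :
    c * v ^ 2 < 1 := by
  have h := sq_lt_sq' hv.1 hv.2
  rwa [div_pow, one_pow, Real.sq_sqrt hc.le, lt_div_iff₀ hc, mul_comm] at h

lemma phaseAngle_mem_Ioo {m u : ℝ} (hu : (1 + m ^ 2) * u ^ 2 < 1) :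
    phaseAngle m u ∈ Set.Ioo (-(π / 2)) (π / 2) := by
  have hmem := div_sqrt_mem_Ioo (z := m * u) (c := 1 - u ^ 2) (by nlinarith)
  exact ⟨neg_pi_div_two_lt_arcsin.2 hmem.1, arcsin_lt_pi_div_two.2 hmem.2⟩

lemma mul_div_sqrt_one_sub_sq_eq_iff {m u : ℝ} (hm : 0 < m) (hu : u ^ 2 < 1) (s : ℝ) :
    m * u / √(1 - u ^ 2) = s ↔ u = s / √(m ^ 2 + s ^ 2) := by
  constructor
  · rintro rfl
    have h1u : 0 < 1 - u ^ 2 := by linarith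
    have hsum : m ^ 2 + (m * u / √(1 - u ^ 2)) ^ 2 = m ^ 2 / (1 - u ^ 2) := by
      rw [div_pow, Real.sq_sqrt h1u.le]
      field_simp
      ring
    rw [hsum, Real.sqrt_div (sq_nonneg m), Real.sqrt_sq hm.le]
    field_simp
  · rintro rfl
    have hms : 0 < m ^ 2 + s ^ 2 := by positivity
    have hdiff : 1 - (s / √(m ^ 2 + s ^ 2)) ^ 2 = m ^ 2 / (m ^ 2 + s ^ 2) := by
      rw [div_pow, Real.sq_sqrt hms.le]
      field_simp
      ring
    rw [hdiff, Real.sqrt_div (sq_nonneg m), Real.sqrt_sq hm.le]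
    field_simp

lemma phaseAngle_eq_iff {m u y : ℝ} (hm : 0 < m) (hu : (1 + m ^ 2) * u ^ 2 < 1)
    (hy : y ∈ Set.Ioo (-(π / 2)) (π / 2)) :
    phaseAngle m u = y ↔ u = Real.sin y / √(m ^ 2 + Real.sin y ^ 2) := by
  rw [phaseAngle, arcsin_eq_iff_eq_sin hy]
  exact mul_div_sqrt_one_sub_sq_eq_iff hm (by nlinarith [sq_nonneg (m * u)]) _

lemma pi_mul_div_mem_Ioo_iff {T : ℝ} (hT : 0 < T) (k : ℝ) :
    π * k / T ∈ Set.Ioo (-(π / 2)) (π / 2) ↔ -(T / 2) < k ∧ k < T / 2 := by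
  rw [Set.mem_Ioo, lt_div_iff₀ hT, div_lt_iff₀ hT]
  constructor <;> rintro ⟨h1, h2⟩ <;> constructor <;> nlinarith [pi_pos]

lemma exists_int_mul_two_pi_eq_iff {T y : ℝ} (hT : T ≠ 0) :
    (∃ n : ℤ, n * (2 * π) = -2 * T * y) ↔ ∃ k : ℤ, y = π * k / T := by
  constructor
  · rintro ⟨n, hn⟩
    refine ⟨-n, ?_⟩
    push_cast
    field_simp
    linarith
  · rintro ⟨k, rfl⟩
    refine ⟨-k, ?_⟩
    push_cast
    field_simp

theorem stmt11 (m : ℝ) (hm : 0 < m) (T : ℕ) (hT : 1 ≤ T)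
    (v : ℝ) (hv : v ∈ Set.Ioo (-(1 / Real.sqrt (1 + m ^ 2))) (1 / Real.sqrt (1 + m ^ 2)))
    (x : ℕ → ℤ)
    (hx : (fun t : ℕ => (x t : ℝ) - v * t) =o[Filter.atTop]
      (fun t : ℕ => (t : ℝ) ^ ((1 : ℝ) / 2))) :
    Filter.Tendsto (deltaMinus m T x) Filter.atTop
      (nhds (-2 * T * Real.arcsin (m * v / Real.sqrt (1 - v ^ 2)))) ∧
    (Filter.Tendsto (fun t : ℕ => rho (2 * π) 0 (deltaMinus m T x t))
        Filter.atTop (nhds 0) ↔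
      ∃ k : ℤ, -((T : ℝ) / 2) < (k : ℝ) ∧ (k : ℝ) < (T : ℝ) / 2 ∧
        v = Real.sin (π * k / T) / Real.sqrt (m ^ 2 + Real.sin (π * k / T) ^ 2)) := by
  have hv' : (1 + m ^ 2) * v ^ 2 < 1 := mul_sq_lt_one_of_mem_Ioo (by positivity) hv
  have hT' : (0 : ℝ) < T := by exact_mod_cast hT
  have hδ : Tendsto (deltaMinus m T x) atTop (𝓝 (-2 * T * phaseAngle m v)) :=
    tendsto_deltaMinus T hv' (tendsto_div_of_isLittleO_rpow (by norm_num) hx)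
  refine ⟨hδ, ?_⟩
  rw [tendsto_rho_zero_nhds_zero_iff hδ, rho_zero_eq_zero_iff,
    exists_int_mul_two_pi_eq_iff hT'.ne']
  constructor
  · rintro ⟨k, hk⟩
    have hmem : π * k / T ∈ Set.Ioo (-(π / 2)) (π / 2) := hk ▸ phaseAngle_mem_Ioo hv'
    obtain ⟨hk₁, hk₂⟩ := (pi_mul_div_mem_Ioo_iff hT' k).1 hmem
    exact ⟨k, hk₁, hk₂, (phaseAngle_eq_iff hm hv' hmem).1 hk⟩
  · rintro ⟨k, hk₁, hk₂, hkv⟩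
    have hmem := (pi_mul_div_mem_Ioo_iff hT' k).2 ⟨hk₁, hk₂⟩
    exact ⟨k, (phaseAngle_eq_iff hm hv' hmem).2 hkv⟩
end

section
/- For all integers 0 ≤ k < t, the value ã₁(−t + 2k + 1, t) equals the coefficient of z^{t−k−1} in the polynomial 2^{−t/2}·(1+z)^{t−k−1}·(1−z)^k. In particular, for every integer n ≥ 0: ã₁(0, 4n+1) = (−1)^n·2^{−(4n+1)/2}·C(2n, n) and ã₁(0, 4n+3) = 0; for every integer n ≥ 1: ã₁(2, 4n+1) = (−1)^n·2^{−(4n−1)/2}·C(2n−1, n); and for every integer n ≥ 0: ã₁(2, 4n+3) = (−1)^n·2^{−(4n+3)/2}·(C(2n, n) − C(2n, n+1)). Here C(a, b) denotes the binomial coefficient. -/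
open Complex Real Filter Asymptotics

noncomputable section Aux

open Polynomial

/-- `(DD n).1 = B_{n+1}`, `(DD n).2 = A_{n+1}` in the run-decomposition of checker paths. -/
def DD : ℕ → Polynomial ℝ × Polynomial ℝ
  | 0 => (Polynomial.X, 0)
  | n + 1 => (Polynomial.X * ((DD n).1 - (DD n).2), (DD n).1 + (DD n).2)

lemma DD_coeff_zero (n : ℕ) : (DD n).1.coeff 0 = 0 ∧ (DD n).2.coeff 0 = 0 := by
  induction n with
  | zero => simp [DD]
  | succ n ih =>
    simp only [DD, Polynomial.coeff_add, Polynomial.mul_coeff_zero, Polynomial.coeff_sub,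
      ih.1, ih.2]
    constructor
    · rw [Polynomial.coeff_X_zero]; ring
    · ring

lemma DD_natDegree (n : ℕ) : (DD n).1.natDegree ≤ n + 1 ∧ (DD n).2.natDegree ≤ n := by
  induction n with
  | zero => simp [DD]
  | succ n ih =>
    have h2 : (DD n).2.natDegree ≤ n + 1 := le_trans ih.2 (by omega)
    have h1 : ((DD n).1 - (DD n).2).natDegree ≤ n + 1 :=
      le_trans (Polynomial.natDegree_sub_le _ _) (by simp [ih.1, h2])
    constructor
    · refine le_trans (Polynomial.natDegree_mul_le) ?_
      have := Polynomial.natDegree_X (R := ℝ)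
      omega
    · exact le_trans (Polynomial.natDegree_add_le _ _) (by simp [ih.1, h2])

lemma DD_fst_top (n : ℕ) : (DD n).1.coeff (n + 1) = 1 := by
  induction n with
  | zero => simp [DD]
  | succ n ih =>
    have hA : (DD n).2.coeff (n + 1) = 0 :=
      Polynomial.coeff_eq_zero_of_natDegree_lt (by have := (DD_natDegree n).2; omega)
    simp only [DD, Polynomial.coeff_X_mul, Polynomial.coeff_sub, ih, hA]
    ring

lemma DD_snd_high (n : ℕ) : (DD n).2.coeff (n + 1) = 0 :=
  Polynomial.coeff_eq_zero_of_natDegree_lt (by have := (DD_natDegree n).2; omega)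


lemma DD_succ (m : ℕ) :
    DD (m + 1) = (Polynomial.X * ((DD m).1 - (DD m).2), (DD m).1 + (DD m).2) := rfl

lemma DD_claim (n : ℕ) : ∀ a b : ℕ, a + b = n →
    (DD (a + b + 1)).2.coeff (b + 1)
        = ((1 + Polynomial.X) ^ a * (1 - Polynomial.X) ^ b : Polynomial ℝ).coeff a ∧
    (DD (a + b + 1)).1.coeff (b + 1)
        = ((1 + Polynomial.X) ^ a * (1 - Polynomial.X) ^ b : Polynomial ℝ).coeff (a + 1) := by
  induction n with
  | zero =>
    intro a b h
    obtain ⟨rfl, rfl⟩ : a = 0 ∧ b = 0 := by omega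
    norm_num [DD, Polynomial.coeff_one]
  | succ n ih =>
    intro a b h
    constructor
    · rcases a with _ | a
      · have hL : (DD (b + 1)).2.coeff (b + 1) = 1 := by
          rw [DD_succ, Polynomial.coeff_add, DD_fst_top b, DD_snd_high b]; ring
        have hR : ((1 - Polynomial.X : Polynomial ℝ) ^ b).coeff 0 = 1 := by
          simp [Polynomial.coeff_zero_eq_eval_zero]
        simp only [Nat.zero_add, pow_zero, one_mul, hR, hL]
      · have IH := ih a b (by omega)
        have key : ((1 + Polynomial.X) ^ (a + 1) * (1 - Polynomial.X) ^ b : Polynomial ℝ)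
            = ((1 + Polynomial.X) ^ a * (1 - Polynomial.X) ^ b)
              + Polynomial.X * ((1 + Polynomial.X) ^ a * (1 - Polynomial.X) ^ b) := by
          ring
        rw [show a + 1 + b + 1 = (a + b + 1) + 1 by omega, DD_succ, Polynomial.coeff_add,
          IH.1, IH.2, key, Polynomial.coeff_add, Polynomial.coeff_X_mul]
    · rcases b with _ | b
      · have hL : (DD (a + 1)).1.coeff 1 = 0 := by
          rw [DD_succ, show (1 : ℕ) = 0 + 1 from rfl, Polynomial.coeff_X_mul,
            Polynomial.coeff_sub, (DD_coeff_zero a).1, (DD_coeff_zero a).2]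
          ring
        have hR : ((1 + Polynomial.X : Polynomial ℝ) ^ a).coeff (a + 1) = 0 := by
          apply Polynomial.coeff_eq_zero_of_natDegree_lt
          have h1 : (1 + Polynomial.X : Polynomial ℝ).natDegree = 1 := by
            rw [add_comm, ← Polynomial.C_1, Polynomial.natDegree_X_add_C]
          have := Polynomial.natDegree_pow_le (p := (1 + Polynomial.X : Polynomial ℝ)) (n := a)
          rw [h1] at this
          omega
        simp only [Nat.add_zero, Nat.zero_add, pow_zero, mul_one, hR, hL]
      · have IH := ih a b (by omega)
        have key : ((1 + Polynomial.X) ^ a * (1 - Polynomial.X) ^ (b + 1) : Polynomial ℝ)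
            = ((1 + Polynomial.X) ^ a * (1 - Polynomial.X) ^ b)
              - Polynomial.X * ((1 + Polynomial.X) ^ a * (1 - Polynomial.X) ^ b) := by
          ring
        rw [show a + (b + 1) + 1 = (a + b + 1) + 1 by omega, DD_succ,
          show b + 1 + 1 = (b + 1) + 1 from rfl, Polynomial.coeff_X_mul,
          Polynomial.coeff_sub, IH.1, IH.2, key, Polynomial.coeff_sub, Polynomial.coeff_X_mul]

lemma turnsOf_congr {T : ℕ} {S S' : Finset ℕ} (h : ∀ i, i < T → (i ∈ S ↔ i ∈ S')) :
    turnsOf T S = turnsOf T S' := by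
  unfold turnsOf
  congr 1
  apply Finset.filter_congr
  intro i hi
  simp only [Finset.mem_Ico] at hi
  rw [h i (by omega), h (i - 1) (by omega)]

lemma turnsOf_succ (n : ℕ) (S : Finset ℕ) :
    turnsOf (n + 2) S = turnsOf (n + 1) S + (if (n + 1 ∈ S ↔ n ∈ S) then 0 else 1) := by
  unfold turnsOf
  rw [Nat.Ico_succ_right_eq_insert_Ico (by omega), Finset.filter_insert]
  by_cases h : (n + 1 ∈ S ↔ n ∈ S)
  · rw [if_neg (by simpa using h), if_pos h, add_zero]
  · rw [if_pos (by simpa using h), if_neg h,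
      Finset.card_insert_of_notMem (by simp [Finset.mem_Ico])]

lemma S_eq (n : ℕ) : ∀ r : ℕ,
    (∑ R ∈ (Finset.range (n + 1)).powerset,
        if 0 ∈ R ∧ n ∈ R ∧ R.card = r then (-Complex.I) ^ turnsOf (n + 1) R else 0)
      = (((DD n).1.coeff r : ℝ) : ℂ) ∧
    (∑ R ∈ (Finset.range (n + 1)).powerset,
        if 0 ∈ R ∧ n ∉ R ∧ R.card = r then (-Complex.I) ^ turnsOf (n + 1) R else 0)
      = -Complex.I * (((DD n).2.coeff r : ℝ) : ℂ) := by
  induction n with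
  | zero =>
    intro r
    have hturn : turnsOf 1 ({0} : Finset ℕ) = 0 := by
      unfold turnsOf; simp
    rw [Finset.range_one, show ({0} : Finset ℕ) = insert 0 ∅ from rfl]
    constructor
    · rw [Finset.sum_powerset_insert (by simp), Finset.powerset_empty, Finset.sum_singleton,
        Finset.sum_singleton]
      simp [hturn, DD, Polynomial.coeff_X, apply_ite (fun x : ℝ => (x : ℂ))]
    · rw [Finset.sum_powerset_insert (by simp), Finset.powerset_empty, Finset.sum_singleton,
        Finset.sum_singleton]
      simp [hturn, DD]
  | succ n ih =>
    intro r
    have hnot : (n + 1) ∉ Finset.range (n + 1) := by simp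
    have hrange : Finset.range (n + 2) = insert (n + 1) (Finset.range (n + 1)) :=
      Finset.range_add_one
    constructor
    · rw [hrange, Finset.sum_powerset_insert hnot]
      have h1 : (∑ R ∈ (Finset.range (n + 1)).powerset,
          if 0 ∈ R ∧ n + 1 ∈ R ∧ R.card = r then (-Complex.I) ^ turnsOf (n + 2) R else 0) = 0 := by
        apply Finset.sum_eq_zero
        intro R hR
        have : n + 1 ∉ R := fun hc => hnot (Finset.mem_powerset.1 hR hc)
        simp [this]
      rw [h1, zero_add]
      rcases r with _ | r
      · rw [Finset.sum_eq_zero, (DD_coeff_zero (n + 1)).1]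
        · simp
        · intro R hR
          have : (insert (n + 1) R).card ≠ 0 := by simp
          simp [this]
      · have step : ∀ R ∈ (Finset.range (n + 1)).powerset,
            (if 0 ∈ insert (n + 1) R ∧ n + 1 ∈ insert (n + 1) R ∧ (insert (n + 1) R).card = r + 1
              then (-Complex.I) ^ turnsOf (n + 2) (insert (n + 1) R) else 0)
            = (if 0 ∈ R ∧ n ∈ R ∧ R.card = r then (-Complex.I) ^ turnsOf (n + 1) R else 0)
              + (-Complex.I) *
                (if 0 ∈ R ∧ n ∉ R ∧ R.card = r then (-Complex.I) ^ turnsOf (n + 1) R else 0) := by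
          intro R hR
          have hRn : n + 1 ∉ R := fun hc => hnot (Finset.mem_powerset.1 hR hc)
          have hcard : (insert (n + 1) R).card = R.card + 1 := Finset.card_insert_of_notMem hRn
          have h0 : 0 ∈ insert (n + 1) R ↔ 0 ∈ R := by simp
          have hmem : n ∈ insert (n + 1) R ↔ n ∈ R := by simp [Nat.succ_ne_self]
          have hcong : turnsOf (n + 1) (insert (n + 1) R) = turnsOf (n + 1) R :=
            turnsOf_congr (fun i hi => by
              simp only [Finset.mem_insert]
              constructor
              · rintro (rfl | h) <;> [omega; exact h]
              · exact Or.inr)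
          have hturn : turnsOf (n + 2) (insert (n + 1) R)
              = turnsOf (n + 1) R + (if n ∈ R then 0 else 1) := by
            rw [turnsOf_succ, hcong]
            congr 1
            simp only [Finset.mem_insert_self, true_iff, hmem]
          by_cases hn : n ∈ R
          · simp only [hturn, hn, if_pos, h0, Finset.mem_insert_self, hcard, true_and,
              not_true, and_false, if_false, add_zero, mul_zero, add_left_inj]
            by_cases h0R : 0 ∈ R <;> simp [h0R]
          · simp only [hturn, hn, h0, Finset.mem_insert_self, hcard, true_and, if_false,
              not_false_iff, and_true, zero_add, mul_ite, mul_zero]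
            by_cases h0R : 0 ∈ R <;> simp [h0R, pow_succ, mul_comm]
        rw [Finset.sum_congr rfl step, Finset.sum_add_distrib, (ih r).1, ← Finset.mul_sum,
          (ih r).2, DD_succ]
        push_cast [Polynomial.coeff_X_mul, Polynomial.coeff_sub]
        ring_nf
        simp [Complex.I_sq]
        ring
    · rw [hrange, Finset.sum_powerset_insert hnot]
      have h2 : (∑ R ∈ (Finset.range (n + 1)).powerset,
          if 0 ∈ insert (n + 1) R ∧ n + 1 ∉ insert (n + 1) R ∧ (insert (n + 1) R).card = r
            then (-Complex.I) ^ turnsOf (n + 2) (insert (n + 1) R) else 0) = 0 := by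
        apply Finset.sum_eq_zero
        intro R hR
        simp
      rw [h2, add_zero]
      have step : ∀ R ∈ (Finset.range (n + 1)).powerset,
          (if 0 ∈ R ∧ n + 1 ∉ R ∧ R.card = r then (-Complex.I) ^ turnsOf (n + 2) R else 0)
          = (-Complex.I) *
              (if 0 ∈ R ∧ n ∈ R ∧ R.card = r then (-Complex.I) ^ turnsOf (n + 1) R else 0)
            + (if 0 ∈ R ∧ n ∉ R ∧ R.card = r then (-Complex.I) ^ turnsOf (n + 1) R else 0) := by
        intro R hR
        have hRn : n + 1 ∉ R := fun hc => hnot (Finset.mem_powerset.1 hR hc)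
        have hturn : turnsOf (n + 2) R = turnsOf (n + 1) R + (if n ∈ R then 1 else 0) := by
          rw [turnsOf_succ]
          congr 1
          by_cases hn : n ∈ R <;> simp [hn, hRn]
        by_cases hn : n ∈ R
        · simp only [hturn, hn, if_pos, hRn, not_false_iff, true_and, and_true, not_true,
            false_and, and_false, if_false, add_zero, mul_ite, mul_zero]
          by_cases h0R : 0 ∈ R <;> simp [h0R, pow_succ, mul_comm]
        · simp [hturn, hn, hRn]
      rw [Finset.sum_congr rfl step, Finset.sum_add_distrib, ← Finset.mul_sum, (ih r).1,
        (ih r).2, DD_succ]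
      push_cast [Polynomial.coeff_add]
      ring

lemma part1 (k t : ℕ) (hk : k < t) :
    a1 (-(t : ℝ) + 2 * k + 1) (t : ℝ) 1 1 =
      (2 : ℝ) ^ (-(t : ℝ) / 2) *
        (((1 + Polynomial.X) ^ (t - k - 1) * (1 - Polynomial.X) ^ k :
          Polynomial ℝ).coeff (t - k - 1)) := by
  have hx : (-(t : ℝ) + 2 * k + 1) / 1 = ((-(t : ℤ) + 2 * k + 1 : ℤ) : ℝ) := by
    push_cast; ring
  have ht : ((t : ℝ) + 1) / 1 = (((t + 1 : ℕ) : ℤ) : ℝ) := by push_cast; ring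
  rw [a1, wf, hx, ht, Int.floor_intCast, Int.floor_intCast, Int.toNat_natCast, mul_one]
  rw [waveA]
  have hcond : ∀ R : Finset ℕ,
      (0 ∈ R ∧ 2 * (R.card : ℤ) - ((t + 1 : ℕ) : ℤ) = -(t : ℤ) + 2 * k + 1)
        ↔ (0 ∈ R ∧ R.card = k + 1) := by
    intro R
    constructor
    · rintro ⟨h0, h2⟩; exact ⟨h0, by omega⟩
    · rintro ⟨h0, h2⟩; exact ⟨h0, by omega⟩
  have hμ : (-Complex.I * ((1 : ℝ) : ℂ)) = -Complex.I := by simp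
  have hsplit : (∑ R ∈ (Finset.range (t + 1)).powerset,
      if 0 ∈ R ∧ 2 * (R.card : ℤ) - ((t + 1 : ℕ) : ℤ) = -(t : ℤ) + 2 * k + 1 then
        (-Complex.I * ((1 : ℝ) : ℂ)) ^ turnsOf (t + 1) R else 0)
      = (((DD t).1.coeff (k + 1) : ℝ) : ℂ)
        + -Complex.I * (((DD t).2.coeff (k + 1) : ℝ) : ℂ) := by
    rw [← (S_eq t (k + 1)).1, ← (S_eq t (k + 1)).2, ← Finset.sum_add_distrib]
    apply Finset.sum_congr rfl
    intro R hR
    simp only [hμ, hcond R]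
    by_cases h0 : 0 ∈ R <;> by_cases hc : R.card = k + 1 <;> by_cases hn : t ∈ R <;>
      simp [h0, hc, hn]
  rw [hsplit]
  have hpow : ((1 : ℝ) + (1 : ℝ) ^ 2) ^ ((1 - ((t + 1 : ℕ) : ℝ)) / 2)
      = (2 : ℝ) ^ (-(t : ℝ) / 2) := by
    norm_num
  rw [hpow]
  have hA : (DD t).2.coeff (k + 1)
      = ((1 + Polynomial.X) ^ (t - k - 1) * (1 - Polynomial.X) ^ k :
          Polynomial ℝ).coeff (t - k - 1) := by
    have hA0 := (DD_claim ((t - k - 1) + k) (t - k - 1) k rfl).1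
    rwa [show (t - k - 1) + k + 1 = t by omega] at hA0
  rw [← hA]
  set c := (2 : ℝ) ^ (-(t : ℝ) / 2)
  set B := (DD t).1.coeff (k + 1)
  set A := (DD t).2.coeff (k + 1)
  simp [Complex.mul_re, Complex.add_re, Complex.add_im, Complex.I_re, Complex.I_im]

lemma coeff_one_sub_sq (m d : ℕ) :
    ((1 - Polynomial.X ^ 2 : Polynomial ℝ) ^ m).coeff d =
      ∑ i ∈ Finset.range (m + 1), (if d = 2 * i then ((-1) ^ i * (m.choose i : ℝ)) else 0) := by
  have h : (1 - Polynomial.X ^ 2 : Polynomial ℝ) ^ m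
      = ∑ i ∈ Finset.range (m + 1),
          Polynomial.C ((-1) ^ i * (m.choose i : ℝ)) * Polynomial.X ^ (2 * i) := by
    rw [sub_eq_add_neg, add_comm, add_pow]
    apply Finset.sum_congr rfl
    intro i _
    rw [one_pow, mul_one, neg_pow, ← pow_mul]
    rw [show ((m.choose i : ℕ) : Polynomial ℝ) = Polynomial.C ((m.choose i : ℝ)) by
      simp]
    rw [show ((-1 : Polynomial ℝ) ^ i) = Polynomial.C ((-1 : ℝ) ^ i) by
      simp]
    rw [Polynomial.C_mul]
    ring
  rw [h, Polynomial.finset_sum_coeff]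
  apply Finset.sum_congr rfl
  intro i _
  rw [Polynomial.coeff_C_mul, Polynomial.coeff_X_pow]
  by_cases hd : d = 2 * i <;> simp [hd]
lemma coeff_one_sub_sq_even (m j : ℕ) :
    ((1 - Polynomial.X ^ 2 : Polynomial ℝ) ^ m).coeff (2 * j)
      = (-1) ^ j * (m.choose j : ℝ) := by
  rw [coeff_one_sub_sq]
  rw [Finset.sum_congr rfl (fun i _ =>
    if_congr (show (2 * j = 2 * i) ↔ (i = j) by omega) rfl rfl)]
  rw [Finset.sum_ite_eq' (Finset.range (m + 1)) j
    (fun i => ((-1 : ℝ) ^ i * (m.choose i : ℝ)))]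
  by_cases hj : j ∈ Finset.range (m + 1)
  · rw [if_pos hj]
  · rw [if_neg hj]
    simp only [Finset.mem_range] at hj
    rw [Nat.choose_eq_zero_of_lt (by omega)]
    simp
lemma coeff_one_sub_sq_odd (m j : ℕ) :
    ((1 - Polynomial.X ^ 2 : Polynomial ℝ) ^ m).coeff (2 * j + 1) = 0 := by
  rw [coeff_one_sub_sq]
  apply Finset.sum_eq_zero
  intro i _
  rw [if_neg (by omega)]
lemma one_add_mul_one_sub (a : ℕ) :
    ((1 + Polynomial.X) ^ a * (1 - Polynomial.X) ^ a : Polynomial ℝ)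
      = (1 - Polynomial.X ^ 2) ^ a := by
  rw [← mul_pow]
  ring_nf

lemma cor3_coeff (m : ℕ) :
    (((1 + Polynomial.X) ^ (2 * m + 1) * (1 - Polynomial.X) ^ (2 * m + 3) :
      Polynomial ℝ)).coeff (2 * m + 1)
      = 2 * (-1) ^ (m + 1) * ((2 * m + 1).choose m : ℝ) := by
  set P : Polynomial ℝ := (1 - Polynomial.X ^ 2) ^ (2 * m + 1) with hP
  have h : ((1 + Polynomial.X) ^ (2 * m + 1) * (1 - Polynomial.X) ^ (2 * m + 3) :
      Polynomial ℝ) = P - (P * Polynomial.X ^ 1 + P * Polynomial.X ^ 1)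
        + P * Polynomial.X ^ 2 := by
    rw [show ((1 - Polynomial.X) ^ (2 * m + 3) : Polynomial ℝ)
        = (1 - Polynomial.X) ^ (2 * m + 1) * (1 - Polynomial.X) ^ 2 by rw [← pow_add],
      ← mul_assoc, one_add_mul_one_sub, ← hP]
    ring
  have hX1 : (P * Polynomial.X ^ 1).coeff (2 * m + 1)
      = (-1) ^ m * ((2 * m + 1).choose m : ℝ) := by
    rw [Polynomial.coeff_mul_X_pow', if_pos (by omega),
      show 2 * m + 1 - 1 = 2 * m by omega, hP, coeff_one_sub_sq_even]
  have hX2 : (P * Polynomial.X ^ 2).coeff (2 * m + 1) = 0 := by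
    rw [Polynomial.coeff_mul_X_pow']
    rcases m with _ | m'
    · simp
    · rw [if_pos (by omega), show 2 * (m' + 1) + 1 - 2 = 2 * m' + 1 by omega, hP,
        coeff_one_sub_sq_odd]
  have hodd : P.coeff (2 * m + 1) = 0 := coeff_one_sub_sq_odd _ _
  rw [h, Polynomial.coeff_add, Polynomial.coeff_sub, Polynomial.coeff_add, hX1, hX2, hodd,
    pow_succ]
  ring

lemma cor4_coeff (n : ℕ) :
    (((1 + Polynomial.X) ^ (2 * n) * (1 - Polynomial.X) ^ (2 * n + 2) :
      Polynomial ℝ)).coeff (2 * n)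
      = (-1) ^ n * (((2 * n).choose n : ℝ) - ((2 * n).choose (n + 1) : ℝ)) := by
  set P : Polynomial ℝ := (1 - Polynomial.X ^ 2) ^ (2 * n) with hP
  have h : ((1 + Polynomial.X) ^ (2 * n) * (1 - Polynomial.X) ^ (2 * n + 2) :
      Polynomial ℝ) = P - (P * Polynomial.X ^ 1 + P * Polynomial.X ^ 1)
        + P * Polynomial.X ^ 2 := by
    rw [show ((1 - Polynomial.X) ^ (2 * n + 2) : Polynomial ℝ)
        = (1 - Polynomial.X) ^ (2 * n) * (1 - Polynomial.X) ^ 2 by rw [← pow_add],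
      ← mul_assoc, one_add_mul_one_sub, ← hP]
    ring
  have hX1 : (P * Polynomial.X ^ 1).coeff (2 * n) = 0 := by
    rw [Polynomial.coeff_mul_X_pow']
    rcases n with _ | n'
    · simp
    · rw [if_pos (by omega), show 2 * (n' + 1) - 1 = 2 * n' + 1 by omega, hP,
        coeff_one_sub_sq_odd]
  have hX2 : (P * Polynomial.X ^ 2).coeff (2 * n)
      = -((-1) ^ n * ((2 * n).choose (n + 1) : ℝ)) := by
    rw [Polynomial.coeff_mul_X_pow']
    rcases n with _ | n'
    · simp
    · rw [if_pos (by omega), show 2 * (n' + 1) - 2 = 2 * n' by omega, hP,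
        coeff_one_sub_sq_even]
      have hsym : (2 * (n' + 1)).choose (n' + 1 + 1) = (2 * (n' + 1)).choose n' := by
        rw [← Nat.choose_symm (by omega : n' + 1 + 1 ≤ 2 * (n' + 1)),
          show 2 * (n' + 1) - (n' + 1 + 1) = n' by omega]
      rw [hsym, pow_succ]
      ring
  rw [h, Polynomial.coeff_add, Polynomial.coeff_sub, Polynomial.coeff_add, hX1, hX2, hP,
    coeff_one_sub_sq_even]
  ring
end Aux


theorem stmt14 :
    (∀ k t : ℕ, k < t →
      a1 (-(t : ℝ) + 2 * k + 1) (t : ℝ) 1 1 =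
        (2 : ℝ) ^ (-(t : ℝ) / 2) *
          (((1 + Polynomial.X) ^ (t - k - 1) * (1 - Polynomial.X) ^ k :
            Polynomial ℝ).coeff (t - k - 1))) ∧
    (∀ n : ℕ, a1 0 ((4 * n + 1 : ℕ) : ℝ) 1 1 =
      (-1 : ℝ) ^ n * (2 : ℝ) ^ (-((4 * (n : ℝ) + 1) / 2)) * (Nat.choose (2 * n) n : ℝ)) ∧
    (∀ n : ℕ, a1 0 ((4 * n + 3 : ℕ) : ℝ) 1 1 = 0) ∧
    (∀ n : ℕ, 1 ≤ n →
      a1 2 ((4 * n + 1 : ℕ) : ℝ) 1 1 =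
        (-1 : ℝ) ^ n * (2 : ℝ) ^ (-((4 * (n : ℝ) - 1) / 2)) *
          (Nat.choose (2 * n - 1) n : ℝ)) ∧
    (∀ n : ℕ, a1 2 ((4 * n + 3 : ℕ) : ℝ) 1 1 =
      (-1 : ℝ) ^ n * (2 : ℝ) ^ (-((4 * (n : ℝ) + 3) / 2)) *
        ((Nat.choose (2 * n) n : ℝ) - (Nat.choose (2 * n) (n + 1) : ℝ))) := by
  refine ⟨part1, ?_, ?_, ?_, ?_⟩
  · -- ã₁(0, 4n+1)
    intro n
    have h := part1 (2 * n) (4 * n + 1) (by omega)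
    rw [show (-((4 * n + 1 : ℕ) : ℝ) + 2 * ((2 * n : ℕ) : ℝ) + 1) = 0 by push_cast; ring,
      show (4 * n + 1) - 2 * n - 1 = 2 * n by omega] at h
    rw [h, one_add_mul_one_sub, coeff_one_sub_sq_even,
      show (-(((4 * n + 1 : ℕ)) : ℝ) / 2) = (-((4 * (n : ℝ) + 1) / 2)) by push_cast; ring]
    ring
  · -- ã₁(0, 4n+3) = 0
    intro n
    have h := part1 (2 * n + 1) (4 * n + 3) (by omega)
    rw [show (-((4 * n + 3 : ℕ) : ℝ) + 2 * ((2 * n + 1 : ℕ) : ℝ) + 1) = 0 by push_cast; ring,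
      show (4 * n + 3) - (2 * n + 1) - 1 = 2 * n + 1 by omega] at h
    rw [h, one_add_mul_one_sub, coeff_one_sub_sq_odd, mul_zero]
  · -- ã₁(2, 4n+1), n ≥ 1
    intro n hn
    obtain ⟨m, rfl⟩ : ∃ m, n = m + 1 := ⟨n - 1, by omega⟩
    have h := part1 (2 * m + 3) (4 * (m + 1) + 1) (by omega)
    rw [show (-((4 * (m + 1) + 1 : ℕ) : ℝ) + 2 * ((2 * m + 3 : ℕ) : ℝ) + 1) = 2 by
        push_cast; ring,
      show (4 * (m + 1) + 1) - (2 * m + 3) - 1 = 2 * m + 1 by omega] at h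
    rw [h, cor3_coeff,
      show (2 * (m + 1) - 1) = 2 * m + 1 by omega,
      show ((2 * m + 1).choose (m + 1)) = (2 * m + 1).choose m by
        rw [← Nat.choose_symm (by omega : m ≤ 2 * m + 1),
          show 2 * m + 1 - m = m + 1 by omega]]
    have hp : (2 : ℝ) ^ (-((4 * ((m + 1 : ℕ) : ℝ) - 1) / 2))
        = (2 : ℝ) ^ (-(((4 * (m + 1) + 1 : ℕ)) : ℝ) / 2) * 2 ^ (1 : ℝ) := by
      rw [← Real.rpow_add (by norm_num)]
      congr 1
      push_cast
      ring
    rw [hp, Real.rpow_one]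
    ring
  · -- ã₁(2, 4n+3)
    intro n
    have h := part1 (2 * n + 2) (4 * n + 3) (by omega)
    rw [show (-((4 * n + 3 : ℕ) : ℝ) + 2 * ((2 * n + 2 : ℕ) : ℝ) + 1) = 2 by push_cast; ring,
      show (4 * n + 3) - (2 * n + 2) - 1 = 2 * n by omega,
      show (2 * n + 2) = 2 * n + 2 by rfl] at h
    rw [h, cor4_coeff,
      show (-(((4 * n + 3 : ℕ)) : ℝ) / 2) = (-((4 * (n : ℝ) + 3) / 2)) by push_cast; ring]
    ring
end
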